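/- arXiv:cond-mat/0307280 — 8 statements merged into one kernel-verified Lean document; each statement's English description precedes it below -/
import Mathlib

section
/- Let 0 < ρ₋ < ρ₊ < 1 and fix a measurable ρ : [-1,1] → [0,1]. Then there is at most one function F ∈ C¹([-1,1]) with F(±1) = ρ±, F' > 0 on [-1,1], satisfying the integro-differential equation F(u) = ρ₋ + (ρ₊ - ρ₋) · (∫_{-1}^u exp{∫_{-1}^v (ρ(w)-F(w)) F'(w)/(F(w)(1-F(w))) dw} dv) / (∫_{-1}^1 exp{∫_{-1}^v (ρ(w)-F(w)) F'(w)/(F(w)(1-F(w))) dw} dv). -/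
open Set MeasureTheory intervalIntegral Real

lemma exp_lip' {B x y : ℝ} (hx : |x| ≤ B) (hy : |y| ≤ B) :
    |Real.exp x - Real.exp y| ≤ Real.exp B * |x - y| := by
  have key : ∀ a b : ℝ, |a| ≤ B → |b| ≤ B → b ≤ a →
      Real.exp a - Real.exp b ≤ Real.exp B * (a - b) := by
    intro a b ha hb hba
    have h1 : (b - a) + 1 ≤ Real.exp (b - a) := Real.add_one_le_exp (b - a)
    have h2 : Real.exp b = Real.exp a * Real.exp (b - a) := by
      rw [← Real.exp_add]; ring_nf
    have h3 : Real.exp a ≤ Real.exp B := Real.exp_le_exp.2 (le_of_abs_le ha)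
    nlinarith [Real.exp_pos a]
  rcases le_total y x with h | h
  · rw [abs_of_nonneg (sub_nonneg.2 (Real.exp_le_exp.2 h)), abs_of_nonneg (sub_nonneg.2 h)]
    exact key x y hx hy h
  · rw [abs_of_nonpos (sub_nonpos.2 (Real.exp_le_exp.2 h)), abs_of_nonpos (sub_nonpos.2 h)]
    have := key y x hy hx h
    linarith

set_option maxHeartbeats 1000000 in
lemma key_exp (g : ℝ → ℝ) (hg : Integrable g (volume : Measure ℝ))
    (φ φd : ℝ → ℝ)
    (hφ : ∀ u ∈ Icc (-1:ℝ) 1, HasDerivAt φ (φd u) u)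
    (hφdc : ContinuousOn φd (Icc (-1:ℝ) 1))
    (t : ℝ) (ht : t ∈ Icc (-1:ℝ) 1)
    (hInt : IntervalIntegrable
      (fun u => (φd u + φ u * g u) * Real.exp (∫ w in (-1:ℝ)..u, g w)) volume (-1) t) :
    φ t * Real.exp (∫ w in (-1:ℝ)..t, g w) - φ (-1) =
      ∫ u in (-1:ℝ)..t, (φd u + φ u * g u) * Real.exp (∫ w in (-1:ℝ)..u, g w) := by
  obtain ⟨ht1, ht2⟩ := ht
  set A : ℝ → ℝ := fun u => ∫ w in (-1:ℝ)..u, g w with hAdef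
  set f₂ : ℝ → ℝ := fun u => (φd u + φ u * g u) * Real.exp (A u) with hf₂def
  have hφc : ContinuousOn φ (Icc (-1:ℝ) 1) := fun u hu =>
    (hφ u hu).continuousAt.continuousWithinAt
  obtain ⟨M, hM⟩ := isCompact_Icc.exists_bound_of_continuousOn hφc
  obtain ⟨Md, hMd⟩ := isCompact_Icc.exists_bound_of_continuousOn hφdc
  have hmem1 : (-1:ℝ) ∈ Icc (-1:ℝ) 1 := by constructor <;> norm_num
  have hM0 : 0 ≤ M := le_trans (norm_nonneg _) (hM (-1) hmem1)
  have hMd0 : 0 ≤ Md := le_trans (norm_nonneg _) (hMd (-1) hmem1)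
  set G : ℝ := ∫ x, |g x| with hGdef
  have hG0 : 0 ≤ G := integral_nonneg fun x => abs_nonneg _
  have habs_int : ∀ (h : ℝ → ℝ), Integrable h volume → ∀ u : ℝ, -1 ≤ u →
      |∫ w in (-1:ℝ)..u, h w| ≤ ∫ x, |h x| := by
    intro h hh u hu
    rw [← Real.norm_eq_abs]
    calc ‖∫ w in (-1:ℝ)..u, h w‖ ≤ ∫ w in (-1:ℝ)..u, ‖h w‖ :=
          intervalIntegral.norm_integral_le_integral_norm hu
      _ = ∫ w in Set.Ioc (-1:ℝ) u, ‖h w‖ := intervalIntegral.integral_of_le hu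
      _ ≤ ∫ x, ‖h x‖ := setIntegral_le_integral hh.norm (ae_of_all _ fun x => norm_nonneg _)
      _ = ∫ x, |h x| := by simp [Real.norm_eq_abs]
  have hAbound : ∀ u : ℝ, -1 ≤ u → |A u| ≤ G := fun u hu => habs_int g hg u hu
  set EB : ℝ := Real.exp (G + 1) with hEBdef
  have hEB0 : 0 < EB := Real.exp_pos _
  set C : ℝ := EB * (2 * M + 2 * Md + M * G) + 1 with hCdef
  have hC : 0 < C := by
    have h1 : (0:ℝ) ≤ 2 * M + 2 * Md + M * G := by positivity
    nlinarith
  suffices hX : ∀ ε : ℝ, 0 < ε → ε ≤ 1 →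
      |φ t * Real.exp (A t) - φ (-1) - ∫ u in (-1:ℝ)..t, f₂ u| ≤ C * ε by
    set X : ℝ := φ t * Real.exp (A t) - φ (-1) - ∫ u in (-1:ℝ)..t, f₂ u with hXdef
    have hX0 : X = 0 := by
      by_contra hne
      have h1 : 0 < |X| := abs_pos.2 hne
      have h2 := hX (min 1 (|X| / (2 * C))) (lt_min one_pos (by positivity)) (min_le_left _ _)
      have h3 : C * min 1 (|X| / (2 * C)) ≤ C * (|X| / (2 * C)) :=
        mul_le_mul_of_nonneg_left (min_le_right _ _) hC.le
      have h4 : C * (|X| / (2 * C)) = |X| / 2 := by field_simp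
      rw [h4] at h3
      linarith
    have h5 : φ t * Real.exp (A t) - φ (-1) - (∫ u in (-1:ℝ)..t, f₂ u) = 0 := hX0
    linarith [h5]
  intro ε hε hε1
  obtain ⟨gc, _, gcl1, gccont, gcint⟩ := hg.exists_hasCompactSupport_integral_sub_le hε
  set Ac : ℝ → ℝ := fun u => ∫ w in (-1:ℝ)..u, gc w with hAcdef
  have hAc_deriv : ∀ u : ℝ, HasDerivAt Ac (gc u) u := fun u =>
    intervalIntegral.integral_hasDerivAt_right (gccont.intervalIntegrable _ _)
      (gccont.stronglyMeasurableAtFilter _ _) gccont.continuousAt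
  have hAc_cont : Continuous Ac := continuous_iff_continuousAt.2 fun u => (hAc_deriv u).continuousAt
  have hgsub : Integrable (fun x => gc x - g x) volume := gcint.sub hg
  have hδ : ∫ x, |gc x - g x| ≤ ε := by
    calc ∫ x, |gc x - g x| = ∫ x, ‖g x - gc x‖ := by
          congr 1; funext x; rw [Real.norm_eq_abs, abs_sub_comm]
      _ ≤ ε := gcl1
  have hdiff : ∀ u : ℝ, -1 ≤ u → |Ac u - A u| ≤ ε := by
    intro u hu
    have h1 : Ac u - A u = ∫ w in (-1:ℝ)..u, (gc w - g w) :=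
      (intervalIntegral.integral_sub gcint.intervalIntegrable hg.intervalIntegrable).symm
    rw [h1]
    exact le_trans (habs_int _ hgsub u hu) hδ
  have hAcb : ∀ u : ℝ, -1 ≤ u → |Ac u| ≤ G + 1 := by
    intro u hu
    have h1 := hAbound u hu
    have h2 := hdiff u hu
    have h3 : |Ac u| ≤ |A u| + |Ac u - A u| := by
      have := norm_sub_le (Ac u - A u) (-(A u))
      simp only [Real.norm_eq_abs, sub_neg_eq_add, sub_add_cancel, abs_neg] at this
      linarith [this]
    linarith
  have hexp_bound : ∀ u : ℝ, -1 ≤ u → |Real.exp (Ac u) - Real.exp (A u)| ≤ EB * ε := by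
    intro u hu
    have h1 : |A u| ≤ G + 1 := le_trans (hAbound u hu) (by linarith)
    calc |Real.exp (Ac u) - Real.exp (A u)| ≤ EB * |Ac u - A u| := exp_lip' (hAcb u hu) h1
      _ ≤ EB * ε := mul_le_mul_of_nonneg_left (hdiff u hu) hEB0.le
  -- FTC for the approximation
  set f₁ : ℝ → ℝ := fun u => (φd u + φ u * gc u) * Real.exp (Ac u) with hf₁def
  have hsub : uIcc (-1:ℝ) t ⊆ Icc (-1:ℝ) 1 := by
    rw [uIcc_of_le ht1]; exact Icc_subset_Icc le_rfl ht2
  have hderiv : ∀ u ∈ uIcc (-1:ℝ) t,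
      HasDerivAt (fun u => φ u * Real.exp (Ac u)) (f₁ u) u := by
    intro u hu
    have h1 := (hφ u (hsub hu)).fun_mul ((hAc_deriv u).exp)
    exact h1.congr_deriv (by show _ = (φd u + φ u * gc u) * Real.exp (Ac u); ring)
  have hf₁cont : ContinuousOn f₁ (uIcc (-1:ℝ) t) := by
    apply ContinuousOn.mul
    · exact ((hφdc.mono hsub).add ((hφc.mono hsub).mul gccont.continuousOn))
    · exact (Real.continuous_exp.comp hAc_cont).continuousOn
  have hf₁int : IntervalIntegrable f₁ volume (-1) t := hf₁cont.intervalIntegrable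
  have hFTC : ∫ u in (-1:ℝ)..t, f₁ u = φ t * Real.exp (Ac t) - φ (-1) := by
    rw [integral_eq_sub_of_hasDerivAt hderiv hf₁int]
    have h0 : Ac (-1) = 0 := intervalIntegral.integral_same
    rw [h0, Real.exp_zero, mul_one]
  -- pointwise bound
  set ψ : ℝ → ℝ := fun u => Md * (EB * ε) + M * EB * |gc u - g u| + M * (EB * ε) * |g u|
    with hψdef
  have hptwise : ∀ u ∈ Icc (-1:ℝ) t, |f₁ u - f₂ u| ≤ ψ u := by
    intro u hu
    have hu1 : u ∈ Icc (-1:ℝ) 1 := ⟨hu.1, le_trans hu.2 ht2⟩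
    have e1 : f₁ u - f₂ u = φd u * (Real.exp (Ac u) - Real.exp (A u)) +
        φ u * (gc u - g u) * Real.exp (Ac u) +
        φ u * g u * (Real.exp (Ac u) - Real.exp (A u)) := by
      simp only [hf₁def, hf₂def]; ring
    have hMu : |φ u| ≤ M := by rw [← Real.norm_eq_abs]; exact hM u hu1
    have hMdu : |φd u| ≤ Md := by rw [← Real.norm_eq_abs]; exact hMd u hu1
    have hexpu : Real.exp (Ac u) ≤ EB := Real.exp_le_exp.2
      (by linarith [le_of_abs_le (hAcb u hu.1)])
    have heb := hexp_bound u hu.1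
    have b1 : |φd u * (Real.exp (Ac u) - Real.exp (A u))| ≤ Md * (EB * ε) := by
      rw [abs_mul]
      exact mul_le_mul hMdu heb (abs_nonneg _) hMd0
    have b2 : |φ u * (gc u - g u) * Real.exp (Ac u)| ≤ M * EB * |gc u - g u| := by
      rw [abs_mul, abs_mul, abs_of_pos (Real.exp_pos (Ac u))]
      calc |φ u| * |gc u - g u| * Real.exp (Ac u) ≤ M * |gc u - g u| * EB := by
            apply mul_le_mul (mul_le_mul hMu le_rfl (abs_nonneg _) hM0) hexpu
              (Real.exp_pos _).le (mul_nonneg hM0 (abs_nonneg _))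
        _ = M * EB * |gc u - g u| := by ring
    have b3 : |φ u * g u * (Real.exp (Ac u) - Real.exp (A u))| ≤ M * (EB * ε) * |g u| := by
      rw [abs_mul, abs_mul]
      calc |φ u| * |g u| * |Real.exp (Ac u) - Real.exp (A u)| ≤ M * |g u| * (EB * ε) := by
            apply mul_le_mul (mul_le_mul hMu le_rfl (abs_nonneg _) hM0) heb
              (abs_nonneg _) (mul_nonneg hM0 (abs_nonneg _))
        _ = M * (EB * ε) * |g u| := by ring
    calc |f₁ u - f₂ u| ≤ |φd u * (Real.exp (Ac u) - Real.exp (A u))| +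
          |φ u * (gc u - g u) * Real.exp (Ac u)| +
          |φ u * g u * (Real.exp (Ac u) - Real.exp (A u))| := by
            rw [e1]; exact abs_add_three _ _ _
      _ ≤ ψ u := by simp only [hψdef]; linarith
  have hint_gcg : IntervalIntegrable (fun u => |gc u - g u|) volume (-1) t :=
    hgsub.abs.intervalIntegrable
  have hint_g : IntervalIntegrable (fun u => |g u|) volume (-1) t :=
    hg.abs.intervalIntegrable
  have hψint : IntervalIntegrable ψ volume (-1) t := by
    apply IntervalIntegrable.add
    apply IntervalIntegrable.add
    · exact _root_.intervalIntegrable_const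
    · exact hint_gcg.const_mul _
    · exact hint_g.const_mul _
  have hsubint : IntervalIntegrable (fun u => f₁ u - f₂ u) volume (-1) t := hf₁int.sub hInt
  have habs2 : |∫ u in (-1:ℝ)..t, (f₁ u - f₂ u)| ≤ ∫ u in (-1:ℝ)..t, ψ u := by
    rw [← Real.norm_eq_abs]
    calc ‖∫ u in (-1:ℝ)..t, (f₁ u - f₂ u)‖ ≤ ∫ u in (-1:ℝ)..t, ‖f₁ u - f₂ u‖ :=
          intervalIntegral.norm_integral_le_integral_norm ht1
      _ ≤ ∫ u in (-1:ℝ)..t, ψ u := by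
          apply intervalIntegral.integral_mono_on ht1 hsubint.norm hψint
          intro x hx
          rw [Real.norm_eq_abs]
          exact hptwise x hx
  have hψval : ∫ u in (-1:ℝ)..t, ψ u ≤ 2 * (Md * (EB * ε)) + M * EB * ε + M * (EB * ε) * G := by
    have e1 : ∫ u in (-1:ℝ)..t, ψ u =
        (∫ _u in (-1:ℝ)..t, (Md * (EB * ε))) + (∫ u in (-1:ℝ)..t, M * EB * |gc u - g u|)
          + ∫ u in (-1:ℝ)..t, M * (EB * ε) * |g u| := by
      rw [← intervalIntegral.integral_add (_root_.intervalIntegrable_const (c := Md * (EB * ε)))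
          (hint_gcg.const_mul _),
        ← intervalIntegral.integral_add ((_root_.intervalIntegrable_const
          (c := Md * (EB * ε))).add (hint_gcg.const_mul _)) (hint_g.const_mul _)]
    have e2 : (∫ _u in (-1:ℝ)..t, (Md * (EB * ε))) ≤ 2 * (Md * (EB * ε)) := by
      rw [intervalIntegral.integral_const, smul_eq_mul]
      have h1 : (0:ℝ) ≤ Md * (EB * ε) := by positivity
      nlinarith
    have e3 : (∫ u in (-1:ℝ)..t, M * EB * |gc u - g u|) ≤ M * EB * ε := by
      rw [intervalIntegral.integral_const_mul]
      have h1 : (∫ u in (-1:ℝ)..t, |gc u - g u|) ≤ ε := by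
        have h2 : (∫ u in (-1:ℝ)..t, |gc u - g u|) ≤ abs (∫ u in (-1:ℝ)..t, |gc u - g u|) :=
          le_abs_self _
        have h3 := habs_int _ hgsub.abs t ht1
        simp only [abs_abs] at h3
        exact le_trans h2 (le_trans h3 hδ)
      have h4 : (0:ℝ) ≤ M * EB := by positivity
      nlinarith
    have e4 : (∫ u in (-1:ℝ)..t, M * (EB * ε) * |g u|) ≤ M * (EB * ε) * G := by
      rw [intervalIntegral.integral_const_mul]
      have h1 : (∫ u in (-1:ℝ)..t, |g u|) ≤ G := by
        have h2 : (∫ u in (-1:ℝ)..t, |g u|) ≤ abs (∫ u in (-1:ℝ)..t, |g u|) := le_abs_self _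
        have h3 := habs_int _ hg.abs t ht1
        simp only [abs_abs] at h3
        exact le_trans h2 h3
      have h4 : (0:ℝ) ≤ M * (EB * ε) := by positivity
      nlinarith
    rw [e1]; linarith
  have hsplit : ∫ u in (-1:ℝ)..t, (f₁ u - f₂ u) =
      (∫ u in (-1:ℝ)..t, f₁ u) - ∫ u in (-1:ℝ)..t, f₂ u :=
    intervalIntegral.integral_sub hf₁int hInt
  set I1 : ℝ := ∫ u in (-1:ℝ)..t, f₁ u with hI1
  set I2 : ℝ := ∫ u in (-1:ℝ)..t, f₂ u with hI2
  set J : ℝ := ∫ u in (-1:ℝ)..t, (f₁ u - f₂ u) with hJ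
  have hb1 : |φ t * Real.exp (A t) - φ t * Real.exp (Ac t)| ≤ M * (EB * ε) := by
    rw [← mul_sub, abs_mul]
    have hMt : |φ t| ≤ M := by rw [← Real.norm_eq_abs]; exact hM t ⟨ht1, ht2⟩
    have h1 : |Real.exp (A t) - Real.exp (Ac t)| ≤ EB * ε := by
      rw [abs_sub_comm]; exact hexp_bound t ht1
    exact mul_le_mul hMt h1 (abs_nonneg _) hM0
  have hXeq2 : φ t * Real.exp (A t) - φ (-1) - I2 =
      (φ t * Real.exp (A t) - φ t * Real.exp (Ac t)) + J := by
    rw [hsplit, hFTC]; ring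
  have hfin : |φ t * Real.exp (A t) - φ (-1) - I2| ≤
      |φ t * Real.exp (A t) - φ t * Real.exp (Ac t)| + |J| := by
    rw [hXeq2]; exact abs_add_le _ _
  have hJb : |J| ≤ 2 * (Md * (EB * ε)) + M * EB * ε + M * (EB * ε) * G :=
    le_trans habs2 hψval
  calc |φ t * Real.exp (A t) - φ (-1) - I2| ≤
        M * (EB * ε) + (2 * (Md * (EB * ε)) + M * EB * ε + M * (EB * ε) * G) := by linarith
    _ ≤ C * ε := by rw [hCdef]; nlinarith

set_option maxHeartbeats 1000000 in
lemma sol_identity (ρm ρp : ℝ) (hm : 0 < ρm) (hmp : ρm < ρp) (hp : ρp < 1)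
    (ρ : ℝ → ℝ) (hρmeas : Measurable ρ) (hρ0 : ∀ u, 0 ≤ ρ u) (hρ1 : ∀ u, ρ u ≤ 1)
    (F F' : ℝ → ℝ)
    (hF : ∀ u ∈ Icc (-1:ℝ) 1, HasDerivAt F (F' u) u)
    (hF'cont : ContinuousOn F' (Icc (-1:ℝ) 1))
    (hbm : F (-1) = ρm) (hbp : F 1 = ρp)
    (hF'pos : ∀ u ∈ Icc (-1:ℝ) 1, 0 < F' u)
    (heq : ∀ u ∈ Icc (-1:ℝ) 1,
      F u = ρm + (ρp - ρm) *
        (∫ v in (-1:ℝ)..u, Real.exp (∫ w in (-1:ℝ)..v,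
            (ρ w - F w) * F' w / (F w * (1 - F w)))) /
        (∫ v in (-1:ℝ)..(1:ℝ), Real.exp (∫ w in (-1:ℝ)..v,
            (ρ w - F w) * F' w / (F w * (1 - F w))))) :
    (∀ u ∈ Icc (-1:ℝ) 1, ρm ≤ F u ∧ F u ≤ ρp) ∧
    (IntegrableOn (fun u => 1 - F u - ρ u) (Icc (-1:ℝ) 1) volume) ∧
    (∀ t ∈ Icc (-1:ℝ) 1, F t * (1 - F t) / F' t - ρm * (1 - ρm) / F' (-1) =
      ∫ u in (-1:ℝ)..t, (1 - F u - ρ u)) := by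
  have hFc : ContinuousOn F (Icc (-1:ℝ) 1) := fun u hu =>
    (hF u hu).continuousAt.continuousWithinAt
  -- monotonicity and bounds
  have hmono : StrictMonoOn F (Icc (-1:ℝ) 1) := by
    apply strictMonoOn_of_deriv_pos (convex_Icc _ _) hFc
    intro x hx
    rw [interior_Icc] at hx
    rw [(hF x (Ioo_subset_Icc_self hx)).deriv]
    exact hF'pos x (Ioo_subset_Icc_self hx)
  have hbounds : ∀ u ∈ Icc (-1:ℝ) 1, ρm ≤ F u ∧ F u ≤ ρp := by
    intro u hu
    constructor
    · rw [← hbm]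
      exact hmono.monotoneOn ⟨le_refl _, by norm_num⟩ hu hu.1
    · rw [← hbp]
      exact hmono.monotoneOn hu ⟨by norm_num, le_refl _⟩ hu.2
  have hF01 : ∀ u ∈ Icc (-1:ℝ) 1, 0 < F u ∧ F u < 1 := fun u hu =>
    ⟨lt_of_lt_of_le hm (hbounds u hu).1, lt_of_le_of_lt (hbounds u hu).2 hp⟩
  have hden : ∀ u ∈ Icc (-1:ℝ) 1, ρm * (1 - ρp) ≤ F u * (1 - F u) := by
    intro u hu
    have h1 := (hbounds u hu).1
    have h2 := (hbounds u hu).2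
    nlinarith
  have hdenpos : (0:ℝ) < ρm * (1 - ρp) := by nlinarith
  -- the integrand g and its global (indicator) version
  set g : ℝ → ℝ := fun w => (ρ w - F w) * F' w / (F w * (1 - F w)) with hgdef
  obtain ⟨MF, hMF⟩ := isCompact_Icc.exists_bound_of_continuousOn hF'cont
  have hMF0 : 0 ≤ MF := le_trans (norm_nonneg _)
    (hMF (-1) ⟨le_refl _, by norm_num⟩)
  set K : ℝ := MF / (ρm * (1 - ρp)) with hKdef
  have hK0 : 0 ≤ K := div_nonneg hMF0 hdenpos.le
  have hgb : ∀ w ∈ Icc (-1:ℝ) 1, |g w| ≤ K := by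
    intro w hw
    have h01 := hF01 w hw
    have hd := hden w hw
    have hnum : |(ρ w - F w) * F' w| ≤ MF := by
      rw [abs_mul]
      have h1 : |ρ w - F w| ≤ 1 := by
        rw [abs_le]; constructor <;> nlinarith [hρ0 w, hρ1 w]
      have h2 : |F' w| ≤ MF := by rw [← Real.norm_eq_abs]; exact hMF w hw
      nlinarith [abs_nonneg (ρ w - F w), abs_nonneg (F' w)]
    rw [hgdef]
    simp only
    rw [abs_div, abs_of_pos (by nlinarith : (0:ℝ) < F w * (1 - F w))]
    exact div_le_div₀ hMF0 hnum hdenpos hd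
  have hgm : AEStronglyMeasurable g (volume.restrict (Icc (-1:ℝ) 1)) := by
    have hρm' : AEMeasurable ρ (volume.restrict (Icc (-1:ℝ) 1)) :=
      hρmeas.aemeasurable
    have hFm : AEMeasurable F (volume.restrict (Icc (-1:ℝ) 1)) :=
      hFc.aemeasurable measurableSet_Icc
    have hF'm : AEMeasurable F' (volume.restrict (Icc (-1:ℝ) 1)) :=
      hF'cont.aemeasurable measurableSet_Icc
    exact (((hρm'.sub hFm).mul hF'm).div
      (hFm.mul (aemeasurable_const.sub hFm))).aestronglyMeasurable
  have hgi : IntegrableOn g (Icc (-1:ℝ) 1) volume := by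
    apply Integrable.mono' (integrable_const K) hgm
    rw [ae_restrict_iff' measurableSet_Icc]
    filter_upwards with w hw
    rw [Real.norm_eq_abs]
    exact hgb w hw
  set gt : ℝ → ℝ := (Icc (-1:ℝ) 1).indicator g with hgtdef
  have hgt : Integrable gt volume := hgi.integrable_indicator measurableSet_Icc
  have hgtb : ∀ w : ℝ, |gt w| ≤ K := by
    intro w
    rw [hgtdef]
    by_cases hw : w ∈ Icc (-1:ℝ) 1
    · rw [indicator_of_mem hw]; exact hgb w hw
    · rw [indicator_of_notMem hw]; simpa using hK0
  set A : ℝ → ℝ := fun u => ∫ w in (-1:ℝ)..u, gt w with hAdef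
  have hAcont : Continuous A := hgt.continuous_primitive _
  have hAb : ∀ u ∈ Icc (-1:ℝ) 1, |A u| ≤ 2 * K := by
    intro u hu
    rw [hAdef]
    simp only
    rw [← Real.norm_eq_abs]
    calc ‖∫ w in (-1:ℝ)..u, gt w‖ ≤ K * |u - (-1)| :=
          intervalIntegral.norm_integral_le_of_norm_le_const
            (fun x _ => by rw [Real.norm_eq_abs]; exact hgtb x)
      _ ≤ 2 * K := by
          have h1 : |u - (-1)| ≤ 2 := by
            rw [abs_le]; constructor <;> [linarith [hu.1]; linarith [hu.2]]
          nlinarith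
  set E : ℝ → ℝ := fun v => Real.exp (A v) with hEdef
  have hEcont : Continuous E := Real.continuous_exp.comp hAcont
  have hEpos : ∀ v, 0 < E v := fun v => Real.exp_pos _
  -- rewrite the inner integrals
  have hAg : ∀ v ∈ Icc (-1:ℝ) 1, (∫ w in (-1:ℝ)..v, g w) = A v := by
    intro v hv
    rw [hAdef]
    apply intervalIntegral.integral_congr
    intro w hw
    rw [uIcc_of_le hv.1] at hw
    have hw1 : w ∈ Icc (-1:ℝ) 1 := ⟨hw.1, le_trans hw.2 hv.2⟩
    rw [hgtdef, indicator_of_mem hw1]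
  have hinner : ∀ u ∈ Icc (-1:ℝ) 1,
      (∫ v in (-1:ℝ)..u, Real.exp (∫ w in (-1:ℝ)..v, g w)) = ∫ v in (-1:ℝ)..u, E v := by
    intro u hu
    apply intervalIntegral.integral_congr
    intro v hv
    rw [uIcc_of_le hu.1] at hv
    have hv1 : v ∈ Icc (-1:ℝ) 1 := ⟨hv.1, le_trans hv.2 hu.2⟩
    rw [hEdef]
    simp only
    rw [hAg v hv1]
  set D : ℝ := ∫ v in (-1:ℝ)..(1:ℝ), E v with hDdef
  have hone : (1:ℝ) ∈ Icc (-1:ℝ) 1 := ⟨by norm_num, le_refl _⟩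
  have hD : 0 < D := by
    rw [hDdef]
    exact intervalIntegral_pos_of_pos (hEcont.intervalIntegrable _ _)
      (fun x => hEpos x) (by norm_num)
  have heqE : ∀ u ∈ Icc (-1:ℝ) 1, F u = ρm + (ρp - ρm) * (∫ v in (-1:ℝ)..u, E v) / D := by
    intro u hu
    rw [← hinner u hu, hDdef, ← hinner 1 hone]
    exact heq u hu
  set c : ℝ := (ρp - ρm) / D with hcdef
  have hc : 0 < c := div_pos (by linarith) hD
  -- F' = c * E on Icc
  have hF'E : ∀ u ∈ Icc (-1:ℝ) 1, F' u = c * E u := by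
    intro u hu
    have hR : HasDerivAt (fun x => ρm + (ρp - ρm) * (∫ v in (-1:ℝ)..x, E v) / D)
        ((ρp - ρm) * E u / D) u := by
      have h0 : HasDerivAt (fun x => ∫ v in (-1:ℝ)..x, E v) (E u) u :=
        intervalIntegral.integral_hasDerivAt_right (hEcont.intervalIntegrable _ _)
          (hEcont.stronglyMeasurableAtFilter _ _) hEcont.continuousAt
      exact ((h0.const_mul (ρp - ρm)).div_const D).const_add ρm
    have hRW : HasDerivWithinAt F ((ρp - ρm) * E u / D) (Icc (-1:ℝ) 1) u :=
      (hR.hasDerivWithinAt).congr (fun y hy => heqE y hy) (heqE u hu)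
    have hUD : UniqueDiffWithinAt ℝ (Icc (-1:ℝ) 1) u :=
      uniqueDiffOn_Icc (by norm_num) u hu
    have h1 := hRW.derivWithin hUD
    have h2 := ((hF u hu).hasDerivWithinAt).derivWithin hUD
    have h3 : F' u = (ρp - ρm) * E u / D := by rw [← h2, h1]
    rw [h3, hcdef]
    ring
  have hEneg1 : A (-1) = 0 := intervalIntegral.integral_same
  have hF'neg1 : F' (-1) = c := by
    rw [hF'E (-1) ⟨le_refl _, by norm_num⟩, hEdef]
    simp only
    rw [hEneg1, Real.exp_zero, mul_one]
  -- integrability of (1 - F - ρ)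
  have hIm : IntegrableOn (fun u => 1 - F u - ρ u) (Icc (-1:ℝ) 1) volume := by
    apply Integrable.mono' (integrable_const (2:ℝ))
    · exact (aestronglyMeasurable_const.sub
        (hFc.aestronglyMeasurable measurableSet_Icc)).sub
        hρmeas.aestronglyMeasurable
    · rw [ae_restrict_iff' measurableSet_Icc]
      filter_upwards with w hw
      rw [Real.norm_eq_abs, abs_le]
      have h01 := hF01 w hw
      constructor <;> nlinarith [hρ0 w, hρ1 w]
  refine ⟨hbounds, hIm, ?_⟩
  intro t htmem
  -- apply key_exp with g := -gt
  set φ : ℝ → ℝ := fun u => F u * (1 - F u) with hφdef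
  set φd : ℝ → ℝ := fun u => (1 - 2 * F u) * F' u with hφddef
  have hφ : ∀ u ∈ Icc (-1:ℝ) 1, HasDerivAt φ (φd u) u := by
    intro u hu
    have h1 := (hF u hu).fun_mul ((hasDerivAt_const u (1:ℝ)).fun_sub (hF u hu))
    exact h1.congr_deriv (by show _ = (1 - 2 * F u) * F' u; ring)
  have hφdc : ContinuousOn φd (Icc (-1:ℝ) 1) :=
    (continuousOn_const.sub (continuousOn_const.mul hFc)).mul hF'cont
  have hφcont : ContinuousOn φ (Icc (-1:ℝ) 1) :=
    hFc.mul (continuousOn_const.sub hFc)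
  -- the integrand of key_exp with -gt
  have hneg : ∀ u : ℝ, (∫ w in (-1:ℝ)..u, -gt w) = -A u := by
    intro u
    rw [hAdef]
    simp only
    rw [← intervalIntegral.integral_neg]
  have hInt : IntervalIntegrable
      (fun u => (φd u + φ u * (-gt u)) * Real.exp (∫ w in (-1:ℝ)..u, -gt w))
      volume (-1) t := by
    have hfun : (fun u => (φd u + φ u * (-gt u)) * Real.exp (∫ w in (-1:ℝ)..u, -gt w)) =
        fun u => (φd u + φ u * (-gt u)) * Real.exp (-A u) := by
      funext u; rw [hneg u]
    rw [hfun]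
    rw [intervalIntegrable_iff_integrableOn_Ioc_of_le htmem.1]
    apply IntegrableOn.mono_set (t := Icc (-1:ℝ) 1) ?_
      (fun x hx => ⟨le_of_lt hx.1, le_trans hx.2 htmem.2⟩)
    apply Integrable.mono' (integrable_const ((MF + 1 * K) * Real.exp (2 * K)))
    · apply AEStronglyMeasurable.mul
      · exact (hφdc.aestronglyMeasurable measurableSet_Icc).add
          ((hφcont.aestronglyMeasurable measurableSet_Icc).mul
            hgt.aestronglyMeasurable.restrict.neg)
      · exact (Real.continuous_exp.comp hAcont.neg).aestronglyMeasurable.restrict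
    · rw [ae_restrict_iff' measurableSet_Icc]
      filter_upwards with w hw
      rw [Real.norm_eq_abs, abs_mul]
      have h01 := hF01 w hw
      have hφb : |φ w| ≤ 1 := by
        rw [hφdef]; simp only; rw [abs_le]; constructor <;> nlinarith
      have hφdb : |φd w| ≤ MF := by
        rw [hφddef]; simp only [abs_mul]
        have h1 : |1 - 2 * F w| ≤ 1 := by rw [abs_le]; constructor <;> nlinarith
        have h2 : |F' w| ≤ MF := by rw [← Real.norm_eq_abs]; exact hMF w hw
        nlinarith [abs_nonneg (1 - 2 * F w), abs_nonneg (F' w)]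
      have hsum : |φd w + φ w * (-gt w)| ≤ MF + 1 * K := by
        calc |φd w + φ w * (-gt w)| ≤ |φd w| + |φ w * (-gt w)| := abs_add_le _ _
          _ ≤ MF + 1 * K := by
              simp only [abs_mul, abs_neg]
              have := hgtb w
              nlinarith [abs_nonneg (φ w), abs_nonneg (gt w)]
      have hexpb : |Real.exp (-A w)| ≤ Real.exp (2 * K) := by
        rw [abs_of_pos (Real.exp_pos _)]
        apply Real.exp_le_exp.2
        have := hAb w hw
        rw [abs_le] at this
        linarith [this.1]
      have h3 : (0:ℝ) ≤ MF + 1 * K := by nlinarith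
      nlinarith [abs_nonneg (φd w + φ w * (-gt w)), abs_nonneg (Real.exp (-A w)),
        Real.exp_pos (2 * K), mul_le_mul hsum hexpb (abs_nonneg _) h3]
  have hkey := key_exp (fun w => -gt w) hgt.neg φ φd hφ hφdc t htmem hInt
  beta_reduce at hkey
  -- rewrite the conclusion
  rw [hneg t] at hkey
  have hRHS : (∫ u in (-1:ℝ)..t, (φd u + φ u * (-gt u)) * Real.exp (∫ w in (-1:ℝ)..u, -gt w)) =
      ∫ u in (-1:ℝ)..t, c * (1 - F u - ρ u) := by
    apply intervalIntegral.integral_congr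
    intro u hu
    rw [uIcc_of_le htmem.1] at hu
    have hu1 : u ∈ Icc (-1:ℝ) 1 := ⟨hu.1, le_trans hu.2 htmem.2⟩
    show (φd u + φ u * (-gt u)) * Real.exp (∫ w in (-1:ℝ)..u, -gt w) = c * (1 - F u - ρ u)
    rw [hneg u]
    have h01 := hF01 u hu1
    have hgtu : gt u = g u := by rw [hgtdef]; exact indicator_of_mem hu1 g
    have hne1 : F u ≠ 0 := h01.1.ne'
    have hne2 : (1 - F u) ≠ 0 := by linarith [h01.2]
    have hφg : φ u * gt u = (ρ u - F u) * F' u := by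
      rw [hgtu, hφdef, hgdef]
      simp only
      field_simp
    have hF'u : F' u = c * E u := hF'E u hu1
    have hEu : E u = Real.exp (A u) := rfl
    have hexpne : Real.exp (A u) ≠ 0 := (Real.exp_pos _).ne'
    calc (φd u + φ u * (-gt u)) * Real.exp (-A u)
        = (φd u - φ u * gt u) * Real.exp (-A u) := by ring
      _ = ((1 - 2 * F u) * F' u - (ρ u - F u) * F' u) * Real.exp (-A u) := by
          rw [hφg]
      _ = (1 - F u - ρ u) * (F' u * Real.exp (-A u)) := by ring
      _ = (1 - F u - ρ u) * (c * (Real.exp (A u) * Real.exp (-A u))) := by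
          rw [hF'u, hEu]; ring
      _ = c * (1 - F u - ρ u) := by
          rw [← Real.exp_add]
          simp only [add_neg_cancel, Real.exp_zero, mul_one]
          ring
  rw [hRHS, intervalIntegral.integral_const_mul] at hkey
  -- now massage LHS
  have hLHS : φ t * Real.exp (-A t) = c * (F t * (1 - F t) / F' t) := by
    have hF't : F' t = c * Real.exp (A t) := hF'E t htmem
    rw [hφdef]
    simp only
    rw [hF't]
    rw [Real.exp_neg]
    field_simp
  rw [hLHS] at hkey
  have hφm1 : φ (-1) = ρm * (1 - ρm) := by rw [hφdef]; simp only; rw [hbm]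
  rw [hφm1] at hkey
  -- divide by c
  have hgoal : c * (F t * (1 - F t) / F' t) - ρm * (1 - ρm) =
      c * ∫ u in (-1:ℝ)..t, (1 - F u - ρ u) := hkey
  rw [hF'neg1]
  have hcne : c ≠ 0 := hc.ne'
  have hF'tne : F' t ≠ 0 := (hF'pos t htmem).ne'
  field_simp at hgoal ⊢
  linear_combination hgoal

set_option maxHeartbeats 1000000 in
lemma main_aux (F₁ F₂ F₁' F₂' : ℝ → ℝ)
    (hF₁ : ∀ u ∈ Icc (-1:ℝ) 1, HasDerivAt F₁ (F₁' u) u)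
    (hF₂ : ∀ u ∈ Icc (-1:ℝ) 1, HasDerivAt F₂ (F₂' u) u)
    (h1pos : ∀ u ∈ Icc (-1:ℝ) 1, 0 < F₁' u)
    (h2pos : ∀ u ∈ Icc (-1:ℝ) 1, 0 < F₂' u)
    (hbnd : ∀ u ∈ Icc (-1:ℝ) 1, 0 < F₁ u ∧ F₁ u < 1)
    (hbm : F₁ (-1) = F₂ (-1)) (hbp : F₁ 1 = F₂ 1)
    (KEY : ∀ a ∈ Icc (-1:ℝ) 1, ∀ b ∈ Icc (-1:ℝ) 1,
      (F₁ a * (1 - F₁ a) / F₁' a - F₂ a * (1 - F₂ a) / F₂' a) -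
      (F₁ b * (1 - F₁ b) / F₁' b - F₂ b * (1 - F₂ b) / F₂' b) =
      ∫ u in b..a, (F₂ u - F₁ u))
    (u₀ : ℝ) (hu₀ : u₀ ∈ Icc (-1:ℝ) 1) (hlt : F₂ u₀ < F₁ u₀) : False := by
  set Df : ℝ → ℝ := fun u => F₁ u - F₂ u with hDfdef
  have hDfc : ContinuousOn Df (Icc (-1:ℝ) 1) := fun u hu =>
    ((hF₁ u hu).continuousAt.continuousWithinAt).sub
      ((hF₂ u hu).continuousAt.continuousWithinAt)
  have hDm1 : Df (-1) = 0 := by rw [hDfdef]; simp only; rw [hbm]; ring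
  have hDp1 : Df 1 = 0 := by rw [hDfdef]; simp only; rw [hbp]; ring
  have hDu₀ : 0 < Df u₀ := by rw [hDfdef]; simp only; linarith
  have hmem1 : (-1:ℝ) ∈ Icc (-1:ℝ) 1 := ⟨le_refl _, by norm_num⟩
  have hone : (1:ℝ) ∈ Icc (-1:ℝ) 1 := ⟨by norm_num, le_refl _⟩
  -- the first crossing points a (to the right) and b (to the left)
  set Sa : Set ℝ := {u | u ∈ Icc u₀ 1 ∧ Df u = 0} with hSadef
  have hSac : IsClosed Sa := by
    have h1 : Sa = Icc u₀ 1 ∩ Df ⁻¹' {0} := by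
      ext x; simp [hSadef, mem_inter_iff]
    rw [h1]
    exact ContinuousOn.preimage_isClosed_of_isClosed
      (hDfc.mono (Icc_subset_Icc hu₀.1 le_rfl)) isClosed_Icc isClosed_singleton
  have hSane : Sa.Nonempty := ⟨1, ⟨hu₀.2, le_refl _⟩, hDp1⟩
  have hSabdd : BddBelow Sa := (bddBelow_Icc : BddBelow (Icc u₀ 1)).mono fun x hx => hx.1
  set a : ℝ := sInf Sa with hadef
  have haS : a ∈ Sa := hSac.csInf_mem hSane hSabdd
  have hau₀ : u₀ ≤ a := haS.1.1
  have ha1 : a ≤ 1 := haS.1.2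
  have hDa : Df a = 0 := haS.2
  have hu₀a : u₀ < a := lt_of_le_of_ne hau₀ (by intro h; rw [← h] at hDa; linarith)
  have posa : ∀ u, u₀ ≤ u → u < a → 0 < Df u := by
    intro u h1 h2
    by_contra hle
    push_neg at hle
    have hzero : ∃ z ∈ Icc u₀ u, Df z = 0 := by
      rcases eq_or_lt_of_le hle with heq | hlt'
      · exact ⟨u, ⟨h1, le_refl _⟩, heq⟩
      · have hsub : Icc u₀ u ⊆ Icc (-1:ℝ) 1 :=
          Icc_subset_Icc hu₀.1 (by linarith)
        have hIVT := intermediate_value_Icc' h1 (hDfc.mono hsub)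
        have h0mem : (0:ℝ) ∈ Icc (Df u) (Df u₀) := ⟨hlt'.le, hDu₀.le⟩
        obtain ⟨z, hz, hz0⟩ := hIVT h0mem
        exact ⟨z, hz, hz0⟩
    obtain ⟨z, hz, hz0⟩ := hzero
    have hzS : z ∈ Sa := ⟨⟨hz.1, by linarith [hz.2]⟩, hz0⟩
    have := csInf_le hSabdd hzS
    rw [← hadef] at this
    linarith [hz.2]
  set Sb : Set ℝ := {u | u ∈ Icc (-1:ℝ) u₀ ∧ Df u = 0} with hSbdef
  have hSbc : IsClosed Sb := by
    have h1 : Sb = Icc (-1:ℝ) u₀ ∩ Df ⁻¹' {0} := by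
      ext x; simp [hSbdef, mem_inter_iff]
    rw [h1]
    exact ContinuousOn.preimage_isClosed_of_isClosed
      (hDfc.mono (Icc_subset_Icc le_rfl hu₀.2)) isClosed_Icc isClosed_singleton
  have hSbne : Sb.Nonempty := ⟨-1, ⟨le_refl _, hu₀.1⟩, hDm1⟩
  have hSbbdd : BddAbove Sb := (bddAbove_Icc : BddAbove (Icc (-1:ℝ) u₀)).mono fun x hx => hx.1
  set b : ℝ := sSup Sb with hbdef
  have hbS : b ∈ Sb := hSbc.csSup_mem hSbne hSbbdd
  have hbm1 : -1 ≤ b := hbS.1.1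
  have hbu₀' : b ≤ u₀ := hbS.1.2
  have hDb : Df b = 0 := hbS.2
  have hbu₀ : b < u₀ := lt_of_le_of_ne hbu₀' (by intro h; rw [h] at hDb; linarith)
  have posb : ∀ u, b < u → u ≤ u₀ → 0 < Df u := by
    intro u h1 h2
    by_contra hle
    push_neg at hle
    have hzero : ∃ z ∈ Icc u u₀, Df z = 0 := by
      rcases eq_or_lt_of_le hle with heq | hlt'
      · exact ⟨u, ⟨le_refl _, h2⟩, heq⟩
      · have hsub : Icc u u₀ ⊆ Icc (-1:ℝ) 1 :=
          Icc_subset_Icc (by linarith) hu₀.2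
        have hIVT := intermediate_value_Icc h2 (hDfc.mono hsub)
        have h0mem : (0:ℝ) ∈ Icc (Df u) (Df u₀) := ⟨hlt'.le, hDu₀.le⟩
        obtain ⟨z, hz, hz0⟩ := hIVT h0mem
        exact ⟨z, hz, hz0⟩
    obtain ⟨z, hz, hz0⟩ := hzero
    have hzS : z ∈ Sb := ⟨⟨by linarith [hz.1], by linarith [hz.2]⟩, hz0⟩
    have := le_csSup hSbbdd hzS
    rw [← hbdef] at this
    linarith [hz.1]
  have haIcc : a ∈ Icc (-1:ℝ) 1 := ⟨le_trans hu₀.1 hau₀, ha1⟩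
  have hbIcc : b ∈ Icc (-1:ℝ) 1 := ⟨hbm1, le_trans hbu₀' hu₀.2⟩
  have hba : b < a := lt_trans hbu₀ hu₀a
  have hpos : ∀ u ∈ Ioo b a, 0 < Df u := by
    intro u hu
    rcases le_total u u₀ with h | h
    · exact posb u hu.1 h
    · exact posa u h hu.2
  -- derivative sign at a
  have hDa' : HasDerivAt Df (F₁' a - F₂' a) a := (hF₁ a haIcc).sub (hF₂ a haIcc)
  have hle_a : F₁' a - F₂' a ≤ 0 := by
    have ht := hasDerivAt_iff_tendsto_slope.1 hDa'
    have ht2 : Filter.Tendsto (slope Df a) (nhdsWithin a (Iio a)) (nhds (F₁' a - F₂' a)) :=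
      ht.mono_left (nhdsWithin_mono a fun x hx => ne_of_lt hx)
    apply le_of_tendsto ht2
    filter_upwards [Ioo_mem_nhdsLT_of_mem (⟨hba, le_refl a⟩ : a ∈ Ioc b a)] with x hx
    have hs : slope Df a x = Df x / (x - a) := by
      rw [slope_def_field, hDa, sub_zero]
    rw [hs]
    apply div_nonpos_of_nonneg_of_nonpos (hpos x hx).le
    linarith [hx.2]
  -- derivative sign at b
  have hDb' : HasDerivAt Df (F₁' b - F₂' b) b := (hF₁ b hbIcc).sub (hF₂ b hbIcc)
  have hge_b : 0 ≤ F₁' b - F₂' b := by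
    have ht := hasDerivAt_iff_tendsto_slope.1 hDb'
    have ht2 : Filter.Tendsto (slope Df b) (nhdsWithin b (Ioi b)) (nhds (F₁' b - F₂' b)) :=
      ht.mono_left (nhdsWithin_mono b fun x hx => ne_of_gt hx)
    apply ge_of_tendsto ht2
    filter_upwards [Ioo_mem_nhdsGT_of_mem (⟨le_refl b, hba⟩ : b ∈ Ico b a)] with x hx
    have hs : slope Df b x = Df x / (x - b) := by
      rw [slope_def_field, hDb, sub_zero]
    rw [hs]
    apply div_nonneg (hpos x hx).le
    linarith [hx.1]
  -- h-comparison at the crossing points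
  have hFa : F₂ a = F₁ a := by
    have : F₁ a - F₂ a = 0 := hDa
    linarith
  have hFb : F₂ b = F₁ b := by
    have : F₁ b - F₂ b = 0 := hDb
    linarith
  have hya := hbnd a haIcc
  have hyb := hbnd b hbIcc
  have h₁ : 0 ≤ F₁ a * (1 - F₁ a) / F₁' a - F₂ a * (1 - F₂ a) / F₂' a := by
    rw [hFa]
    have hprod : 0 < F₁ a * (1 - F₁ a) := by nlinarith [hya.1, hya.2]
    have := div_le_div_of_nonneg_left hprod.le (h1pos a haIcc) (by linarith : F₁' a ≤ F₂' a)
    linarith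
  have h₂ : F₁ b * (1 - F₁ b) / F₁' b - F₂ b * (1 - F₂ b) / F₂' b ≤ 0 := by
    rw [hFb]
    have hprod : 0 < F₁ b * (1 - F₁ b) := by nlinarith [hyb.1, hyb.2]
    have := div_le_div_of_nonneg_left hprod.le (h2pos b hbIcc) (by linarith : F₂' b ≤ F₁' b)
    linarith
  -- the integral is strictly negative
  have hDfint : IntervalIntegrable Df volume b a := by
    apply ContinuousOn.intervalIntegrable
    apply hDfc.mono
    rw [uIcc_of_le hba.le]
    exact Icc_subset_Icc hbIcc.1 haIcc.2
  have hIpos : 0 < ∫ u in b..a, Df u :=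
    intervalIntegral_pos_of_pos_on hDfint hpos hba
  have hIneg : (∫ u in b..a, (F₂ u - F₁ u)) = -∫ u in b..a, Df u := by
    rw [← intervalIntegral.integral_neg]
    apply intervalIntegral.integral_congr
    intro x _
    rw [hDfdef]
    simp only
    ring
  have hkey := KEY a haIcc b hbIcc
  rw [hIneg] at hkey
  linarith

set_option maxHeartbeats 1000000 in
/-- Uniqueness of C¹, strictly increasing solutions of the
integro-differential equation (DeqI). -/
theorem stmt2
    (ρm ρp : ℝ) (hm : 0 < ρm) (hmp : ρm < ρp) (hp : ρp < 1)
    (ρ : ℝ → ℝ) (hρmeas : Measurable ρ) (hρ0 : ∀ u, 0 ≤ ρ u) (hρ1 : ∀ u, ρ u ≤ 1)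
    (F₁ F₂ F₁' F₂' : ℝ → ℝ)
    (hF₁ : ∀ u ∈ Icc (-1:ℝ) 1, HasDerivAt F₁ (F₁' u) u)
    (hF₂ : ∀ u ∈ Icc (-1:ℝ) 1, HasDerivAt F₂ (F₂' u) u)
    (hF₁'cont : ContinuousOn F₁' (Icc (-1:ℝ) 1))
    (hF₂'cont : ContinuousOn F₂' (Icc (-1:ℝ) 1))
    (hb₁m : F₁ (-1) = ρm) (hb₁p : F₁ 1 = ρp)
    (hb₂m : F₂ (-1) = ρm) (hb₂p : F₂ 1 = ρp)
    (hF₁'pos : ∀ u ∈ Icc (-1:ℝ) 1, 0 < F₁' u)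
    (hF₂'pos : ∀ u ∈ Icc (-1:ℝ) 1, 0 < F₂' u)
    (heq₁ : ∀ u ∈ Icc (-1:ℝ) 1,
      F₁ u = ρm + (ρp - ρm) *
        (∫ v in (-1:ℝ)..u, Real.exp (∫ w in (-1:ℝ)..v,
            (ρ w - F₁ w) * F₁' w / (F₁ w * (1 - F₁ w)))) /
        (∫ v in (-1:ℝ)..(1:ℝ), Real.exp (∫ w in (-1:ℝ)..v,
            (ρ w - F₁ w) * F₁' w / (F₁ w * (1 - F₁ w)))))
    (heq₂ : ∀ u ∈ Icc (-1:ℝ) 1,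
      F₂ u = ρm + (ρp - ρm) *
        (∫ v in (-1:ℝ)..u, Real.exp (∫ w in (-1:ℝ)..v,
            (ρ w - F₂ w) * F₂' w / (F₂ w * (1 - F₂ w)))) /
        (∫ v in (-1:ℝ)..(1:ℝ), Real.exp (∫ w in (-1:ℝ)..v,
            (ρ w - F₂ w) * F₂' w / (F₂ w * (1 - F₂ w))))) :
    ∀ u ∈ Icc (-1:ℝ) 1, F₁ u = F₂ u := by
  obtain ⟨hbnd₁, hIm₁, hid₁⟩ := sol_identity ρm ρp hm hmp hp ρ hρmeas hρ0 hρ1 F₁ F₁'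
    hF₁ hF₁'cont hb₁m hb₁p hF₁'pos heq₁
  obtain ⟨hbnd₂, hIm₂, hid₂⟩ := sol_identity ρm ρp hm hmp hp ρ hρmeas hρ0 hρ1 F₂ F₂'
    hF₂ hF₂'cont hb₂m hb₂p hF₂'pos heq₂
  have hbnd01₁ : ∀ u ∈ Icc (-1:ℝ) 1, 0 < F₁ u ∧ F₁ u < 1 := fun u hu =>
    ⟨lt_of_lt_of_le hm (hbnd₁ u hu).1, lt_of_le_of_lt (hbnd₁ u hu).2 hp⟩
  have hbnd01₂ : ∀ u ∈ Icc (-1:ℝ) 1, 0 < F₂ u ∧ F₂ u < 1 := fun u hu =>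
    ⟨lt_of_lt_of_le hm (hbnd₂ u hu).1, lt_of_le_of_lt (hbnd₂ u hu).2 hp⟩
  have hint₁ : ∀ s ∈ Icc (-1:ℝ) 1, ∀ r ∈ Icc (-1:ℝ) 1,
      IntervalIntegrable (fun u => 1 - F₁ u - ρ u) volume s r := by
    intro s hs r hr
    rw [intervalIntegrable_iff]
    apply hIm₁.mono_set
    intro x hx
    rcases le_total s r with h | h
    · rw [uIoc_of_le h] at hx
      exact ⟨le_trans hs.1 hx.1.le, le_trans hx.2 hr.2⟩
    · rw [uIoc_of_ge h] at hx
      exact ⟨le_trans hr.1 hx.1.le, le_trans hx.2 hs.2⟩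
  have hint₂ : ∀ s ∈ Icc (-1:ℝ) 1, ∀ r ∈ Icc (-1:ℝ) 1,
      IntervalIntegrable (fun u => 1 - F₂ u - ρ u) volume s r := by
    intro s hs r hr
    rw [intervalIntegrable_iff]
    apply hIm₂.mono_set
    intro x hx
    rcases le_total s r with h | h
    · rw [uIoc_of_le h] at hx
      exact ⟨le_trans hs.1 hx.1.le, le_trans hx.2 hr.2⟩
    · rw [uIoc_of_ge h] at hx
      exact ⟨le_trans hr.1 hx.1.le, le_trans hx.2 hs.2⟩
  have KEY : ∀ a ∈ Icc (-1:ℝ) 1, ∀ b ∈ Icc (-1:ℝ) 1,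
      (F₁ a * (1 - F₁ a) / F₁' a - F₂ a * (1 - F₂ a) / F₂' a) -
      (F₁ b * (1 - F₁ b) / F₁' b - F₂ b * (1 - F₂ b) / F₂' b) =
      ∫ u in b..a, (F₂ u - F₁ u) := by
    intro a ha b hb
    have d₁ : F₁ a * (1 - F₁ a) / F₁' a - F₁ b * (1 - F₁ b) / F₁' b =
        ∫ u in b..a, (1 - F₁ u - ρ u) := by
      have e1 := hid₁ a ha
      have e2 := hid₁ b hb
      have e3 : (∫ u in (-1:ℝ)..a, (1 - F₁ u - ρ u)) - ∫ u in (-1:ℝ)..b, (1 - F₁ u - ρ u) =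
          ∫ u in b..a, (1 - F₁ u - ρ u) :=
        intervalIntegral.integral_interval_sub_left (hint₁ (-1) ⟨le_refl _, by norm_num⟩ a ha)
          (hint₁ (-1) ⟨le_refl _, by norm_num⟩ b hb)
      linarith
    have d₂ : F₂ a * (1 - F₂ a) / F₂' a - F₂ b * (1 - F₂ b) / F₂' b =
        ∫ u in b..a, (1 - F₂ u - ρ u) := by
      have e1 := hid₂ a ha
      have e2 := hid₂ b hb
      have e3 : (∫ u in (-1:ℝ)..a, (1 - F₂ u - ρ u)) - ∫ u in (-1:ℝ)..b, (1 - F₂ u - ρ u) =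
          ∫ u in b..a, (1 - F₂ u - ρ u) :=
        intervalIntegral.integral_interval_sub_left (hint₂ (-1) ⟨le_refl _, by norm_num⟩ a ha)
          (hint₂ (-1) ⟨le_refl _, by norm_num⟩ b hb)
      linarith
    have d₃ : (∫ u in b..a, (1 - F₁ u - ρ u)) - ∫ u in b..a, (1 - F₂ u - ρ u) =
        ∫ u in b..a, (F₂ u - F₁ u) := by
      rw [← intervalIntegral.integral_sub (hint₁ b hb a ha) (hint₂ b hb a ha)]
      apply intervalIntegral.integral_congr
      intro x _
      ring
    linarith
  intro u hu
  by_contra hne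
  rcases lt_or_gt_of_ne hne with h | h
  · -- F₁ u < F₂ u : apply main_aux with roles swapped
    have KEY' : ∀ a ∈ Icc (-1:ℝ) 1, ∀ b ∈ Icc (-1:ℝ) 1,
        (F₂ a * (1 - F₂ a) / F₂' a - F₁ a * (1 - F₁ a) / F₁' a) -
        (F₂ b * (1 - F₂ b) / F₂' b - F₁ b * (1 - F₁ b) / F₁' b) =
        ∫ u in b..a, (F₁ u - F₂ u) := by
      intro x hx y hy
      have h1 := KEY x hx y hy
      have h2 : (∫ u in y..x, (F₁ u - F₂ u)) = -∫ u in y..x, (F₂ u - F₁ u) := by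
        rw [← intervalIntegral.integral_neg]
        apply intervalIntegral.integral_congr
        intro z _
        ring
      rw [h2]
      linarith
    exact main_aux F₂ F₁ F₂' F₁' hF₂ hF₁ hF₂'pos hF₁'pos hbnd01₂
      (hb₂m.trans hb₁m.symm) (hb₂p.trans hb₁p.symm) KEY' u hu h
  · exact main_aux F₁ F₂ F₁' F₂' hF₁ hF₂ hF₁'pos hF₂'pos hbnd01₁
      (hb₁m.trans hb₂m.symm) (hb₁p.trans hb₂p.symm) KEY u hu h
end

section
/- Let 0 < ρ₋ < ρ₊ < 1, set b := ((ρ₊-ρ₋)/2)·(γ₋/γ₊) and B := ((ρ₊-ρ₋)/2)·(γ₊/γ₋) where γ± = ρ±/(1-ρ±). For ρ ∈ L^∞([-1,1]) with 0 ≤ ρ ≤ 1 a.e. and f ∈ C¹([-1,1]) with f(±1)=ρ±, f' > 0, define g(u) := ρ₋ + (ρ₊-ρ₋)·(∫_{-1}^u e^{R(v)} dv)/(∫_{-1}^1 e^{R(v)} dv) with R(v) := ∫_{-1}^v (ρ(w)-f(w)) f'(w)/(f(w)(1-f(w))) dw. Then b ≤ g'(u) ≤ B for all u ∈ [-1,1].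 -/
open Set MeasureTheory intervalIntegral Real

/-- The map `K_ρ` sends `F` into the set `B`: the derivative of
`g = K_ρ(f)` satisfies `b ≤ g' ≤ B` with `b = ((ρ₊-ρ₋)/2)(γ₋/γ₊)`,
`B = ((ρ₊-ρ₋)/2)(γ₊/γ₋)`, `γ± = ρ±/(1-ρ±)`. -/
theorem stmt3
    (ρm ρp : ℝ) (hm : 0 < ρm) (hmp : ρm < ρp) (hp : ρp < 1)
    (ρ : ℝ → ℝ) (hρmeas : Measurable ρ) (hρ0 : ∀ᵐ u ∂(volume : Measure ℝ), 0 ≤ ρ u)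
    (hρ1 : ∀ᵐ u ∂(volume : Measure ℝ), ρ u ≤ 1)
    (f f' : ℝ → ℝ)
    (hf : ∀ u ∈ Icc (-1:ℝ) 1, HasDerivAt f (f' u) u)
    (hf'cont : ContinuousOn f' (Icc (-1:ℝ) 1))
    (hbm : f (-1) = ρm) (hbp : f 1 = ρp)
    (hf'pos : ∀ u ∈ Icc (-1:ℝ) 1, 0 < f' u)
    (g g' : ℝ → ℝ)
    (hgdef : ∀ u ∈ Icc (-1:ℝ) 1,
      g u = ρm + (ρp - ρm) *
        (∫ v in (-1:ℝ)..u, Real.exp (∫ w in (-1:ℝ)..v,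
            (ρ w - f w) * f' w / (f w * (1 - f w)))) /
        (∫ v in (-1:ℝ)..(1:ℝ), Real.exp (∫ w in (-1:ℝ)..v,
            (ρ w - f w) * f' w / (f w * (1 - f w)))))
    (hg : ∀ u ∈ Icc (-1:ℝ) 1, HasDerivAt g (g' u) u) :
    ∀ u ∈ Icc (-1:ℝ) 1,
      ((ρp - ρm)/2) * ((ρm/(1-ρm)) / (ρp/(1-ρp))) ≤ g' u ∧
      g' u ≤ ((ρp - ρm)/2) * ((ρp/(1-ρp)) / (ρm/(1-ρm))) := by
  have h11 : (-1:ℝ) ≤ 1 := by norm_num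
  have h1mem : (1:ℝ) ∈ Icc (-1:ℝ) 1 := right_mem_Icc.2 h11
  have hm1mem : (-1:ℝ) ∈ Icc (-1:ℝ) 1 := left_mem_Icc.2 h11
  have hfc : ContinuousOn f (Icc (-1:ℝ) 1) := fun u hu =>
    (hf u hu).continuousAt.continuousWithinAt
  have hmono : StrictMonoOn f (Icc (-1:ℝ) 1) := by
    apply strictMonoOn_of_deriv_pos (convex_Icc _ _) hfc
    intro x hx
    rw [interior_Icc] at hx
    rw [(hf x (Ioo_subset_Icc_self hx)).deriv]
    exact hf'pos x (Ioo_subset_Icc_self hx)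
  have hfl : ∀ u ∈ Icc (-1:ℝ) 1, ρm ≤ f u := by
    intro u hu
    rw [← hbm]
    exact hmono.monotoneOn hm1mem hu hu.1
  have hfu : ∀ u ∈ Icc (-1:ℝ) 1, f u ≤ ρp := by
    intro u hu
    rw [← hbp]
    exact hmono.monotoneOn hu h1mem hu.2
  have hf0 : ∀ u ∈ Icc (-1:ℝ) 1, 0 < f u := fun u hu => lt_of_lt_of_le hm (hfl u hu)
  have hf1 : ∀ u ∈ Icc (-1:ℝ) 1, f u < 1 := fun u hu => lt_of_le_of_lt (hfu u hu) hp
  have hP : ∀ u ∈ Icc (-1:ℝ) 1, 0 < f u * (1 - f u) := fun u hu =>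
    mul_pos (hf0 u hu) (by linarith [hf1 u hu])
  set φ : ℝ → ℝ := fun w => (ρ w - f w) * f' w / (f w * (1 - f w)) with hφdef
  set bnd : ℝ → ℝ := fun w => f' w / (f w * (1 - f w)) with hbnddef
  have hbndcont : ContinuousOn bnd (Icc (-1:ℝ) 1) :=
    hf'cont.div (hfc.mul (continuousOn_const.sub hfc)) (fun u hu => (hP u hu).ne')
  have hφaesm : AEStronglyMeasurable φ (volume.restrict (Icc (-1:ℝ) 1)) := by
    have hfa : AEMeasurable f (volume.restrict (Icc (-1:ℝ) 1)) :=
      hfc.aemeasurable measurableSet_Icc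
    have hf'a : AEMeasurable f' (volume.restrict (Icc (-1:ℝ) 1)) :=
      hf'cont.aemeasurable measurableSet_Icc
    exact (((hρmeas.aemeasurable.sub hfa).mul hf'a).div
      (hfa.mul (aemeasurable_const.sub hfa))).aestronglyMeasurable
  have hsubIcc : ∀ v ∈ Icc (-1:ℝ) 1, uIcc (-1:ℝ) v ⊆ Icc (-1:ℝ) 1 := by
    intro v hv
    rw [uIcc_of_le hv.1]
    exact Icc_subset_Icc le_rfl hv.2
  have hφint : ∀ v ∈ Icc (-1:ℝ) 1, IntervalIntegrable φ volume (-1) v := by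
    intro v hv
    have hIsub : Set.uIoc (-1:ℝ) v ⊆ Icc (-1:ℝ) 1 :=
      subset_trans Set.uIoc_subset_uIcc (hsubIcc v hv)
    apply IntervalIntegrable.mono_fun'
      ((hbndcont.mono (hsubIcc v hv)).intervalIntegrable)
    · exact hφaesm.mono_measure (Measure.restrict_mono hIsub le_rfl)
    · filter_upwards [ae_restrict_of_ae hρ0, ae_restrict_of_ae hρ1,
        ae_restrict_mem measurableSet_uIoc] with w hw0 hw1 hwmem
      have hwI : w ∈ Icc (-1:ℝ) 1 := hIsub hwmem
      have hfw0 := hf0 w hwI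
      have hfw1 := hf1 w hwI
      have hPw := hP w hwI
      have hf'w := hf'pos w hwI
      simp only [hφdef, hbnddef, Real.norm_eq_abs]
      rw [abs_div, abs_of_pos hPw, abs_mul, abs_of_pos hf'w]
      have habs : |ρ w - f w| ≤ 1 := abs_le.2 ⟨by linarith, by linarith⟩
      have hle : |ρ w - f w| * f' w ≤ f' w := by
        nlinarith [abs_nonneg (ρ w - f w)]
      exact (div_le_div_iff_of_pos_right hPw).2 hle
  -- FTC identities
  have hlogub : ∀ v ∈ Icc (-1:ℝ) 1,
      (∫ w in (-1:ℝ)..v, f' w / f w) = Real.log (f v) - Real.log (f (-1)) := by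
    intro v hv
    apply intervalIntegral.integral_eq_sub_of_hasDerivAt
    · intro x hx
      exact (hf x (hsubIcc v hv hx)).log (hf0 x (hsubIcc v hv hx)).ne'
    · exact ((hf'cont.mono (hsubIcc v hv)).div (hfc.mono (hsubIcc v hv))
        (fun x hx => (hf0 x (hsubIcc v hv hx)).ne')).intervalIntegrable
  have hloglb : ∀ v ∈ Icc (-1:ℝ) 1,
      (∫ w in (-1:ℝ)..v, -(f' w / (1 - f w)))
        = Real.log (1 - f v) - Real.log (1 - f (-1)) := by
    intro v hv
    apply intervalIntegral.integral_eq_sub_of_hasDerivAt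
    · intro x hx
      have h1 : HasDerivAt (fun y => 1 - f y) (-(f' x)) x :=
        (hf x (hsubIcc v hv hx)).const_sub 1
      have h2 : (1 : ℝ) - f x ≠ 0 := by
        have := hf1 x (hsubIcc v hv hx); intro h; linarith
      have h3 := h1.log h2
      have : -(f' x) / (1 - f x) = -(f' x / (1 - f x)) := neg_div _ _
      rw [this] at h3
      exact h3
    · apply ContinuousOn.intervalIntegrable
      apply ContinuousOn.neg
      exact (hf'cont.mono (hsubIcc v hv)).div
        (continuousOn_const.sub (hfc.mono (hsubIcc v hv)))
        (fun x hx => by have := hf1 x (hsubIcc v hv hx); intro h; linarith)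
  -- integrability of the comparison functions
  have hubint : ∀ v ∈ Icc (-1:ℝ) 1,
      IntervalIntegrable (fun w => f' w / f w) volume (-1) v := fun v hv =>
    (((hf'cont.mono (hsubIcc v hv)).div (hfc.mono (hsubIcc v hv))
      (fun x hx => (hf0 x (hsubIcc v hv hx)).ne'))).intervalIntegrable
  have hlbint : ∀ v ∈ Icc (-1:ℝ) 1,
      IntervalIntegrable (fun w => -(f' w / (1 - f w))) volume (-1) v := fun v hv => by
    apply ContinuousOn.intervalIntegrable
    apply ContinuousOn.neg
    exact (hf'cont.mono (hsubIcc v hv)).div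
      (continuousOn_const.sub (hfc.mono (hsubIcc v hv)))
      (fun x hx => by have := hf1 x (hsubIcc v hv hx); intro h; linarith)
  -- a.e. pointwise comparisons on [-1, v]
  have hRub : ∀ v ∈ Icc (-1:ℝ) 1,
      (∫ w in (-1:ℝ)..v, φ w) ≤ Real.log (f v) - Real.log (f (-1)) := by
    intro v hv
    rw [← hlogub v hv]
    apply intervalIntegral.integral_mono_ae_restrict hv.1 (hφint v hv) (hubint v hv)
    have hIsub : Icc (-1:ℝ) v ⊆ Icc (-1:ℝ) 1 := Icc_subset_Icc le_rfl hv.2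
    filter_upwards [ae_restrict_of_ae hρ0, ae_restrict_of_ae hρ1,
      ae_restrict_mem measurableSet_Icc] with w hw0 hw1 hwmem
    have hwI : w ∈ Icc (-1:ℝ) 1 := hIsub hwmem
    have hfw0 := hf0 w hwI
    have hfw1 := hf1 w hwI
    have hPw := hP w hwI
    have hf'w := hf'pos w hwI
    simp only [hφdef]
    have key : (ρ w - f w) * f' w / (f w * (1 - f w))
        ≤ (1 - f w) * f' w / (f w * (1 - f w)) :=
      (div_le_div_iff_of_pos_right hPw).2 (by nlinarith)
    have key2 : (1 - f w) * f' w / (f w * (1 - f w)) = f' w / f w := by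
      have h1w : (1:ℝ) - f w ≠ 0 := by linarith
      have h2w : f w ≠ 0 := hfw0.ne'
      field_simp
    calc (ρ w - f w) * f' w / (f w * (1 - f w))
        ≤ (1 - f w) * f' w / (f w * (1 - f w)) := key
      _ = f' w / f w := key2
  have hRlb : ∀ v ∈ Icc (-1:ℝ) 1,
      Real.log (1 - f v) - Real.log (1 - f (-1)) ≤ ∫ w in (-1:ℝ)..v, φ w := by
    intro v hv
    rw [← hloglb v hv]
    apply intervalIntegral.integral_mono_ae_restrict hv.1 (hlbint v hv) (hφint v hv)
    have hIsub : Icc (-1:ℝ) v ⊆ Icc (-1:ℝ) 1 := Icc_subset_Icc le_rfl hv.2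
    filter_upwards [ae_restrict_of_ae hρ0, ae_restrict_of_ae hρ1,
      ae_restrict_mem measurableSet_Icc] with w hw0 hw1 hwmem
    have hwI : w ∈ Icc (-1:ℝ) 1 := hIsub hwmem
    have hfw0 := hf0 w hwI
    have hfw1 := hf1 w hwI
    have hPw := hP w hwI
    have hf'w := hf'pos w hwI
    simp only [hφdef]
    have key : (-(f w)) * f' w / (f w * (1 - f w))
        ≤ (ρ w - f w) * f' w / (f w * (1 - f w)) :=
      (div_le_div_iff_of_pos_right hPw).2 (by nlinarith)
    have key2 : (-(f w)) * f' w / (f w * (1 - f w)) = -(f' w / (1 - f w)) := by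
      have h1w : (1:ℝ) - f w ≠ 0 := by linarith
      have h2w : f w ≠ 0 := hfw0.ne'
      field_simp
    calc -(f' w / (1 - f w)) = (-(f w)) * f' w / (f w * (1 - f w)) := key2.symm
      _ ≤ (ρ w - f w) * f' w / (f w * (1 - f w)) := key
  -- bounds on E
  set E : ℝ → ℝ := fun v => Real.exp (∫ w in (-1:ℝ)..v, φ w) with hEdef
  have hElb : ∀ v ∈ Icc (-1:ℝ) 1, (1 - ρp) / (1 - ρm) ≤ E v := by
    intro v hv
    have h1 : Real.exp (Real.log (1 - f v) - Real.log (1 - f (-1))) ≤ E v :=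
      Real.exp_le_exp.2 (hRlb v hv)
    rw [Real.exp_sub, Real.exp_log (by linarith [hf1 v hv]),
      Real.exp_log (by rw [hbm]; linarith)] at h1
    refine le_trans ?_ h1
    rw [hbm]
    exact div_le_div_of_nonneg_right (by linarith [hfu v hv]) (by linarith)
  have hEub : ∀ v ∈ Icc (-1:ℝ) 1, E v ≤ ρp / ρm := by
    intro v hv
    have h1 : E v ≤ Real.exp (Real.log (f v) - Real.log (f (-1))) :=
      Real.exp_le_exp.2 (hRub v hv)
    rw [Real.exp_sub, Real.exp_log (hf0 v hv), Real.exp_log (by rw [hbm]; exact hm)] at h1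
    refine h1.trans ?_
    rw [hbm]
    exact div_le_div_of_nonneg_right (hfu v hv) hm.le
  -- continuity and integrability of E
  have hEcont : ContinuousOn E (Icc (-1:ℝ) 1) := by
    have h1 : ContinuousOn (fun v => ∫ w in (-1:ℝ)..v, φ w) (uIcc (-1:ℝ) 1) :=
      intervalIntegral.continuousOn_primitive_interval' (hφint 1 h1mem) left_mem_uIcc
    rw [uIcc_of_le h11] at h1
    exact Real.continuous_exp.comp_continuousOn h1
  have hEint : ∀ v ∈ Icc (-1:ℝ) 1, IntervalIntegrable E volume (-1) v := fun v hv =>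
    (hEcont.mono (hsubIcc v hv)).intervalIntegrable
  set C : ℝ := ∫ v in (-1:ℝ)..(1:ℝ), E v with hCdef
  have hClb : 2 * ((1 - ρp) / (1 - ρm)) ≤ C := by
    have h1 : (∫ _ in (-1:ℝ)..(1:ℝ), (1 - ρp) / (1 - ρm)) ≤ C :=
      intervalIntegral.integral_mono_on h11 intervalIntegrable_const (hEint 1 h1mem)
        (fun x hx => hElb x hx)
    rwa [intervalIntegral.integral_const, smul_eq_mul, show (1:ℝ) - (-1) = 2 by norm_num] at h1
  have hCub : C ≤ 2 * (ρp / ρm) := by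
    have h1 : C ≤ ∫ _ in (-1:ℝ)..(1:ℝ), ρp / ρm :=
      intervalIntegral.integral_mono_on h11 (hEint 1 h1mem) intervalIntegrable_const
        (fun x hx => hEub x hx)
    rwa [intervalIntegral.integral_const, smul_eq_mul, show (1:ℝ) - (-1) = 2 by norm_num] at h1
  have hmub : (0:ℝ) < (1 - ρp) / (1 - ρm) := by
    apply div_pos <;> linarith
  have hMub : (0:ℝ) < ρp / ρm := div_pos (by linarith) hm
  have hC0 : 0 < C := lt_of_lt_of_le (by linarith) hClb
  -- derivative of the primitive of E within Icc
  have haesm : AEStronglyMeasurable E (volume.restrict (Icc (-1:ℝ) 1)) :=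
    hEcont.aestronglyMeasurable measurableSet_Icc
  have hNd : ∀ u ∈ Icc (-1:ℝ) 1,
      HasDerivWithinAt (fun x => ∫ v in (-1:ℝ)..x, E v) (E u) (Icc (-1:ℝ) 1) u := by
    intro u hu
    haveI : Fact (u ∈ Icc (-1:ℝ) 1) := ⟨hu⟩
    exact intervalIntegral.integral_hasDerivWithinAt_right (hEint u hu)
      ⟨Icc (-1:ℝ) 1, self_mem_nhdsWithin, haesm⟩ (hEcont u hu)
  -- identify g'
  have hgd : ∀ u ∈ Icc (-1:ℝ) 1, g' u = (ρp - ρm) * E u / C := by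
    intro u hu
    have hud : UniqueDiffWithinAt ℝ (Icc (-1:ℝ) 1) u :=
      (uniqueDiffOn_Icc (by norm_num : (-1:ℝ) < 1)) u hu
    have hG : HasDerivWithinAt (fun x => ρm + (ρp - ρm) * (∫ v in (-1:ℝ)..x, E v) / C)
        ((ρp - ρm) * E u / C) (Icc (-1:ℝ) 1) u :=
      (((hNd u hu).const_mul (ρp - ρm)).div_const C).const_add ρm
    have hgG : HasDerivWithinAt g ((ρp - ρm) * E u / C) (Icc (-1:ℝ) 1) u :=
      hG.congr (fun y hy => hgdef y hy) (hgdef u hu)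
    have h2 : HasDerivWithinAt g (g' u) (Icc (-1:ℝ) 1) u := (hg u hu).hasDerivWithinAt
    rw [← h2.derivWithin hud, hgG.derivWithin hud]
  -- final bounds
  intro u hu
  have hEl := hElb u hu
  have hEu := hEub u hu
  have hE0 : 0 ≤ E u := le_trans hmub.le hEl
  have hgu := hgd u hu
  have hρρ : (0:ℝ) ≤ ρp - ρm := by linarith
  have hn1 : (1:ℝ) - ρm ≠ 0 := by linarith
  have hn2 : (1:ℝ) - ρp ≠ 0 := by linarith
  have hn3 : ρm ≠ 0 := hm.ne'
  have hn4 : ρp ≠ 0 := (hm.trans hmp).ne'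
  constructor
  · have key : ((1 - ρp) / (1 - ρm)) / (2 * (ρp / ρm)) ≤ E u / C :=
      div_le_div₀ hE0 hEl hC0 hCub
    calc ((ρp - ρm)/2) * ((ρm/(1-ρm)) / (ρp/(1-ρp)))
        = (ρp - ρm) * (((1 - ρp) / (1 - ρm)) / (2 * (ρp / ρm))) := by
          field_simp
      _ ≤ (ρp - ρm) * (E u / C) := mul_le_mul_of_nonneg_left key hρρ
      _ = (ρp - ρm) * E u / C := (mul_div_assoc _ _ _).symm
      _ = g' u := hgu.symm
  · have key : E u / C ≤ (ρp / ρm) / (2 * ((1 - ρp) / (1 - ρm))) :=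
      div_le_div₀ hMub.le hEu (by linarith) hClb
    calc g' u = (ρp - ρm) * E u / C := hgu
      _ = (ρp - ρm) * (E u / C) := mul_div_assoc _ _ _
      _ ≤ (ρp - ρm) * ((ρp / ρm) / (2 * ((1 - ρp) / (1 - ρm)))) :=
          mul_le_mul_of_nonneg_left key hρρ
      _ = ((ρp - ρm)/2) * ((ρp/(1-ρp)) / (ρm/(1-ρm))) := by
          field_simp
end

section
/- Let 0 < ρ₋ < ρ₊ < 1. There exists a constant C depending only on ρ₋, ρ₊ such that for every ρ ∈ L^∞([-1,1]) with 0 ≤ ρ ≤ 1 and every f ∈ C¹([-1,1]) with f(±1)=ρ±, b ≤ f' ≤ B (with b,B as determined by ρ±), the function g = K_ρ(f) defined by the integro-differential map satisfies |g'(u) - g'(v)| ≤ C|u - v| for all u,v ∈ [-1,1]. -/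
open Set MeasureTheory intervalIntegral Real

private lemma exp_lip_aux {a b c : ℝ} (ha : a ≤ c) (hb : b ≤ c) :
    |Real.exp a - Real.exp b| ≤ Real.exp c * |a - b| := by
  wlog h : b ≤ a generalizing a b
  · rw [abs_sub_comm, abs_sub_comm a b]; exact this hb ha (le_of_not_ge h)
  have h1 : (b - a) + 1 ≤ Real.exp (b - a) := Real.add_one_le_exp _
  have h2 : Real.exp b = Real.exp a * Real.exp (b - a) := by
    rw [← Real.exp_add]; ring_nf
  have h3 : Real.exp a ≤ Real.exp c := Real.exp_le_exp.2 ha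
  have h4 : 0 < Real.exp a := Real.exp_pos a
  have h5 : Real.exp b ≤ Real.exp a := Real.exp_le_exp.2 h
  rw [abs_of_nonneg (by linarith : (0:ℝ) ≤ Real.exp a - Real.exp b),
    abs_of_nonneg (by linarith : (0:ℝ) ≤ a - b)]
  nlinarith

/-- There is a constant `C = C(ρ₋,ρ₊)` such that for every admissible `ρ` and
every `f` in the class `B` (with `b ≤ f' ≤ B` determined by `ρ±`), the derivative of
`g = K_ρ(f)` is Lipschitz with constant `C`, uniformly in `ρ` and `f`. -/
theorem stmt4
    (ρm ρp : ℝ) (hm : 0 < ρm) (hmp : ρm < ρp) (hp : ρp < 1) :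
    ∃ C : ℝ, 0 < C ∧
      ∀ (ρ : ℝ → ℝ), Measurable ρ → (∀ u, 0 ≤ ρ u) → (∀ u, ρ u ≤ 1) →
      ∀ (f f' : ℝ → ℝ),
        (∀ u ∈ Icc (-1:ℝ) 1, HasDerivAt f (f' u) u) →
        ContinuousOn f' (Icc (-1:ℝ) 1) →
        f (-1) = ρm → f 1 = ρp →
        (∀ u ∈ Icc (-1:ℝ) 1,
          ((ρp - ρm)/2) * ((ρm/(1-ρm)) / (ρp/(1-ρp))) ≤ f' u ∧
          f' u ≤ ((ρp - ρm)/2) * ((ρp/(1-ρp)) / (ρm/(1-ρm)))) →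
      ∀ (g g' : ℝ → ℝ),
        (∀ u ∈ Icc (-1:ℝ) 1,
          g u = ρm + (ρp - ρm) *
            (∫ v in (-1:ℝ)..u, Real.exp (∫ w in (-1:ℝ)..v,
                (ρ w - f w) * f' w / (f w * (1 - f w)))) /
            (∫ v in (-1:ℝ)..(1:ℝ), Real.exp (∫ w in (-1:ℝ)..v,
                (ρ w - f w) * f' w / (f w * (1 - f w))))) →
        (∀ u ∈ Icc (-1:ℝ) 1, HasDerivAt g (g' u) u) →
      ∀ u ∈ Icc (-1:ℝ) 1, ∀ v ∈ Icc (-1:ℝ) 1,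
        |g' u - g' v| ≤ C * |u - v| := by
  have h1m : 0 < 1 - ρm := by linarith
  have h1p : 0 < 1 - ρp := by linarith
  have hpm : 0 < ρp - ρm := by linarith
  set B : ℝ := ((ρp - ρm)/2) * ((ρp/(1-ρp)) / (ρm/(1-ρm))) with hBdef
  have hB : 0 < B :=
    mul_pos (by linarith) (div_pos (div_pos (by linarith) h1p) (div_pos hm h1m))
  set δ : ℝ := ρm * (1 - ρp) with hδdef
  have hδ : 0 < δ := mul_pos hm h1p
  set M : ℝ := B / δ with hMdef
  have hM : 0 < M := div_pos hB hδ
  refine ⟨(ρp - ρm) / (2 * Real.exp (-(2*M))) * (Real.exp (2*M) * M), by positivity, ?_⟩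
  intro ρ hρmeas hρ0 hρ1 f f' hf hf'c hfm1 hf1 hbB g g' hg hg' u hu v hv
  have hm1 : (-1:ℝ) ∈ Icc (-1:ℝ) 1 := left_mem_Icc.2 (by norm_num)
  have h1i : (1:ℝ) ∈ Icc (-1:ℝ) 1 := right_mem_Icc.2 (by norm_num)
  set h : ℝ → ℝ := fun w => (ρ w - f w) * f' w / (f w * (1 - f w)) with hhdef
  have hfc : ContinuousOn f (Icc (-1:ℝ) 1) :=
    fun x hx => ((hf x hx).continuousAt).continuousWithinAt
  -- monotonicity of f, hence bounds on f
  have hb0 : 0 < ((ρp - ρm)/2) * ((ρm/(1-ρm)) / (ρp/(1-ρp))) :=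
    mul_pos (by linarith) (div_pos (div_pos hm h1m) (div_pos (by linarith) h1p))
  have hmono : MonotoneOn f (Icc (-1:ℝ) 1) := by
    apply monotoneOn_of_deriv_nonneg (convex_Icc _ _) hfc
    · intro x hx
      rw [interior_Icc] at hx
      exact (hf x (Ioo_subset_Icc_self hx)).differentiableAt.differentiableWithinAt
    · intro x hx
      rw [interior_Icc] at hx
      rw [(hf x (Ioo_subset_Icc_self hx)).deriv]
      linarith [(hbB x (Ioo_subset_Icc_self hx)).1]
  have hfl : ∀ x ∈ Icc (-1:ℝ) 1, ρm ≤ f x := fun x hx =>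
    hfm1 ▸ hmono hm1 hx hx.1
  have hfu : ∀ x ∈ Icc (-1:ℝ) 1, f x ≤ ρp := fun x hx =>
    hf1 ▸ hmono hx h1i hx.2
  -- bound on the integrand h
  have hhb : ∀ w ∈ Icc (-1:ℝ) 1, |h w| ≤ M := by
    intro w hw
    have h1 : ρm ≤ f w := hfl w hw
    have h2 : f w ≤ ρp := hfu w hw
    have h3 : δ ≤ f w * (1 - f w) := by rw [hδdef]; nlinarith
    have hfw' := hbB w hw
    have h4 : |(ρ w - f w) * f' w| ≤ B := by
      rw [abs_mul]
      have e1 : |ρ w - f w| ≤ 1 := by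
        rw [abs_le]; constructor <;> nlinarith [hρ0 w, hρ1 w]
      have e2 : |f' w| ≤ B := by
        rw [abs_le]; exact ⟨by nlinarith [hfw'.1], hfw'.2⟩
      nlinarith [abs_nonneg (ρ w - f w), abs_nonneg (f' w)]
    show |(ρ w - f w) * f' w / (f w * (1 - f w))| ≤ M
    rw [abs_div, abs_of_pos (lt_of_lt_of_le hδ h3)]
    exact div_le_div₀ hB.le h4 hδ h3
  -- integrability of h
  have hfm : AEMeasurable f (volume.restrict (Icc (-1:ℝ) 1)) :=
    hfc.aemeasurable measurableSet_Icc
  have hf'm : AEMeasurable f' (volume.restrict (Icc (-1:ℝ) 1)) :=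
    hf'c.aemeasurable measurableSet_Icc
  have hhm : AEStronglyMeasurable h (volume.restrict (Icc (-1:ℝ) 1)) :=
    (((hρmeas.aemeasurable.sub hfm).mul hf'm).div
      (hfm.mul (aemeasurable_const.sub hfm))).aestronglyMeasurable
  have hhint : IntegrableOn h (Icc (-1:ℝ) 1) := by
    apply Integrable.mono' (integrable_const M) hhm
    filter_upwards [ae_restrict_mem measurableSet_Icc] with w hw
    simpa using hhb w hw
  have hsub : ∀ a ∈ Icc (-1:ℝ) 1, ∀ b ∈ Icc (-1:ℝ) 1, uIcc a b ⊆ Icc (-1:ℝ) 1 := by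
    intro a ha b hb
    exact uIcc_subset_Icc ha hb
  have hint : ∀ a ∈ Icc (-1:ℝ) 1, ∀ b ∈ Icc (-1:ℝ) 1, IntervalIntegrable h volume a b := by
    intro a ha b hb
    exact (hhint.mono_set (hsub a ha b hb)).intervalIntegrable
  -- R and its properties
  set R : ℝ → ℝ := fun x => ∫ w in (-1:ℝ)..x, h w with hRdef
  have hRsub : ∀ a ∈ Icc (-1:ℝ) 1, ∀ b ∈ Icc (-1:ℝ) 1,
      R b - R a = ∫ w in a..b, h w := by
    intro a ha b hb
    have := integral_add_adjacent_intervals (hint (-1) hm1 a ha) (hint a ha b hb)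
    simp only [hRdef]
    linarith
  have hRlip : ∀ a ∈ Icc (-1:ℝ) 1, ∀ b ∈ Icc (-1:ℝ) 1, |R b - R a| ≤ M * |b - a| := by
    intro a ha b hb
    rw [hRsub a ha b hb]
    have hbd : ∀ x ∈ Set.uIoc a b, ‖h x‖ ≤ M := by
      intro x hx
      have hx' : x ∈ Icc (-1:ℝ) 1 := hsub a ha b hb (uIoc_subset_uIcc hx)
      simpa [Real.norm_eq_abs] using hhb x hx'
    simpa [Real.norm_eq_abs] using
      intervalIntegral.norm_integral_le_of_norm_le_const hbd
  have hRb : ∀ a ∈ Icc (-1:ℝ) 1, |R a| ≤ 2*M := by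
    intro a ha
    have h0 : R (-1) = 0 := intervalIntegral.integral_same
    have hlp := hRlip (-1) hm1 a ha
    rw [h0, sub_zero] at hlp
    have hab : |a - (-1)| ≤ 2 := by
      rw [abs_le]; constructor
      · linarith [ha.1]
      · linarith [ha.2]
    nlinarith [abs_nonneg (a - (-1))]
  have hRc : ContinuousOn R (Icc (-1:ℝ) 1) := by
    apply LipschitzOnWith.continuousOn (K := Real.toNNReal M)
    apply LipschitzOnWith.of_dist_le_mul
    intro x hx y hy
    rw [Real.dist_eq, Real.dist_eq, Real.coe_toNNReal M hM.le]
    exact hRlip y hy x hx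
  -- φ = exp ∘ R
  set φ : ℝ → ℝ := fun x => Real.exp (R x) with hφdef
  have hφc : ContinuousOn φ (Icc (-1:ℝ) 1) := Real.continuous_exp.comp_continuousOn hRc
  have hφint : ∀ a ∈ Icc (-1:ℝ) 1, ∀ b ∈ Icc (-1:ℝ) 1,
      IntervalIntegrable φ volume a b := by
    intro a ha b hb
    exact (hφc.mono (hsub a ha b hb)).intervalIntegrable
  -- D
  set D : ℝ := ∫ x in (-1:ℝ)..1, φ x with hDdef
  have hDlb : 2 * Real.exp (-(2*M)) ≤ D := by
    have hle : ∫ x in (-1:ℝ)..1, Real.exp (-(2*M)) ≤ D := by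
      apply intervalIntegral.integral_mono_on (by norm_num)
        intervalIntegrable_const (hφint _ hm1 _ h1i)
      intro x hx
      exact Real.exp_le_exp.2 (by linarith [(abs_le.1 (hRb x hx)).1])
    rw [intervalIntegral.integral_const] at hle
    rw [show (1:ℝ) - (-1) = 2 by norm_num, smul_eq_mul] at hle
    exact hle
  have hDpos : 0 < D := lt_of_lt_of_le (by positivity) hDlb
  -- derivative formula for g'
  have hg'eq : ∀ x ∈ Icc (-1:ℝ) 1, g' x = (ρp - ρm) * φ x / D := by
    intro x hx
    have hNd : HasDerivWithinAt (fun y => ∫ t in (-1:ℝ)..y, φ t) (φ x) (Icc (-1:ℝ) 1) x := by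
      haveI : Fact (x ∈ Icc (-1:ℝ) 1) := ⟨hx⟩
      exact intervalIntegral.integral_hasDerivWithinAt_right (hφint _ hm1 _ hx)
        (hφc.stronglyMeasurableAtFilter_nhdsWithin measurableSet_Icc x)
        (hφc x hx)
    have hGd : HasDerivWithinAt
        (fun y => ρm + (ρp - ρm) * (∫ t in (-1:ℝ)..y, φ t) / D)
        ((ρp - ρm) * φ x / D) (Icc (-1:ℝ) 1) x :=
      ((hNd.const_mul (ρp - ρm)).div_const D).const_add ρm
    have hgd2 : HasDerivWithinAt g ((ρp - ρm) * φ x / D) (Icc (-1:ℝ) 1) x :=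
      hGd.congr (fun y hy => hg y hy) (hg x hx)
    have hgw : HasDerivWithinAt g (g' x) (Icc (-1:ℝ) 1) x := (hg' x hx).hasDerivWithinAt
    have hud : UniqueDiffWithinAt ℝ (Icc (-1:ℝ) 1) x :=
      uniqueDiffOn_Icc (by norm_num) x hx
    rw [← hgw.derivWithin hud]
    exact hgd2.derivWithin hud
  -- final estimate
  rw [hg'eq u hu, hg'eq v hv]
  have key : |φ u - φ v| ≤ Real.exp (2*M) * (M * |u - v|) := by
    have h1 : R u ≤ 2*M := (abs_le.1 (hRb u hu)).2
    have h2 : R v ≤ 2*M := (abs_le.1 (hRb v hv)).2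
    calc |φ u - φ v| ≤ Real.exp (2*M) * |R u - R v| := exp_lip_aux h1 h2
      _ ≤ Real.exp (2*M) * (M * |u - v|) :=
        mul_le_mul_of_nonneg_left (hRlip v hv u hu) (Real.exp_nonneg _)
  have e1 : (ρp - ρm) * φ u / D - (ρp - ρm) * φ v / D = ((ρp - ρm)/D) * (φ u - φ v) := by
    ring
  rw [e1, abs_mul, abs_of_nonneg (div_nonneg hpm.le hDpos.le)]
  calc (ρp - ρm)/D * |φ u - φ v|
      ≤ (ρp - ρm)/(2 * Real.exp (-(2*M))) * (Real.exp (2*M) * (M * |u - v|)) := by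
        apply mul_le_mul _ key (abs_nonneg _)
          (div_nonneg hpm.le (by positivity))
        exact div_le_div_of_nonneg_left hpm.le (by positivity) hDlb
    _ = (ρp - ρm) / (2 * Real.exp (-(2*M))) * (Real.exp (2*M) * M) * |u - v| := by
        ring
end

section
/- Let 0 < ρ₋ < ρ₊ < 1. The functional S(ρ) := sup_{f ∈ F} G(ρ,f), where G and F are as defined (G(ρ,f)=∫_{-1}^1[ρ log(ρ/f)+(1-ρ)log((1-ρ)/(1-f))+log(f'/((ρ₊-ρ₋)/2))]du and F the set of strictly increasing C¹ functions with boundary values ρ±), is bounded above by a finite constant depending only on ρ₋, ρ₊, uniformly over ρ ∈ L^∞([-1,1]) with 0 ≤ ρ ≤ 1. -/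
open Set MeasureTheory intervalIntegral Real

lemma stmt8_term_bound {r x a : ℝ} (hr0 : 0 ≤ r) (hr1 : r ≤ 1)
    (ha : 0 < a) (ha1 : a ≤ 1) (hax : a ≤ x) :
    r * Real.log (r / x) ≤ -Real.log a := by
  have hla : Real.log a ≤ 0 := Real.log_nonpos ha.le ha1
  rcases eq_or_lt_of_le hr0 with h | h
  · simp [← h, neg_nonneg.mpr hla]
  · have hx : 0 < x := lt_of_lt_of_le ha hax
    rw [Real.log_div h.ne' hx.ne']
    have h1 : r * Real.log r ≤ 0 :=
      mul_nonpos_of_nonneg_of_nonpos hr0 (Real.log_nonpos hr0 hr1)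
    have h2 : Real.log a ≤ Real.log x := Real.log_le_log ha hax
    nlinarith [mul_le_mul_of_nonneg_left h2 hr0]

/-- The functional `S(ρ) = sup_f G(ρ,f)` is bounded above by a constant
depending only on `ρ₋, ρ₊`, uniformly over all profiles `ρ` with `0 ≤ ρ ≤ 1` and all
admissible `f` (C¹, strictly increasing, boundary values `ρ±`). -/
theorem stmt8
    (ρm ρp : ℝ) (hm : 0 < ρm) (hmp : ρm < ρp) (hp : ρp < 1) :
    ∃ C : ℝ,
      ∀ (ρ : ℝ → ℝ), Measurable ρ → (∀ u, 0 ≤ ρ u) → (∀ u, ρ u ≤ 1) →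
      ∀ (f f' : ℝ → ℝ),
        (∀ u ∈ Icc (-1:ℝ) 1, HasDerivAt f (f' u) u) →
        ContinuousOn f' (Icc (-1:ℝ) 1) →
        f (-1) = ρm → f 1 = ρp →
        (∀ u ∈ Icc (-1:ℝ) 1, 0 < f' u) →
      (∫ u in (-1:ℝ)..1,
          (ρ u * Real.log (ρ u / f u)
            + (1 - ρ u) * Real.log ((1 - ρ u) / (1 - f u))
            + Real.log (f' u / ((ρp - ρm)/2)))) ≤ C := by
  set K : ℝ := -Real.log ρm - Real.log (1 - ρp) with hK
  refine ⟨2 * K, ?_⟩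
  intro ρ hρmeas hρ0 hρ1 f f' hderiv hcont hfm hfp hpos
  have hm1 : ρm < 1 := hmp.trans hp
  have h1p : 0 < 1 - ρp := by linarith
  have hKpos : 0 ≤ K := by
    have := Real.log_nonpos hm.le hm1.le
    have := Real.log_nonpos h1p.le (by linarith)
    simp only [hK]; linarith
  set m : ℝ := (ρp - ρm) / 2 with hmdef
  have hm0 : 0 < m := by simp only [hmdef]; linarith
  -- f is monotone on [-1,1]
  have hfc : ContinuousOn f (Icc (-1:ℝ) 1) := fun u hu =>
    (hderiv u hu).continuousAt.continuousWithinAt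
  have hmono : MonotoneOn f (Icc (-1:ℝ) 1) := by
    apply (strictMonoOn_of_deriv_pos (convex_Icc _ _) hfc ?_).monotoneOn
    intro u hu
    have hu' : u ∈ Icc (-1:ℝ) 1 := interior_subset hu
    rw [(hderiv u hu').deriv]
    exact hpos u hu'
  have hfrange : ∀ u ∈ Icc (-1:ℝ) 1, ρm ≤ f u ∧ f u ≤ ρp := by
    intro u hu
    constructor
    · rw [← hfm]; exact hmono (by norm_num) hu hu.1
    · rw [← hfp]; exact hmono hu (by norm_num) hu.2
  -- pointwise bound
  set b : ℝ → ℝ := fun u => K + (f' u / m - 1) with hb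
  have hptwise : ∀ u ∈ Icc (-1:ℝ) 1,
      ρ u * Real.log (ρ u / f u)
        + (1 - ρ u) * Real.log ((1 - ρ u) / (1 - f u))
        + Real.log (f' u / m) ≤ b u := by
    intro u hu
    obtain ⟨hf1, hf2⟩ := hfrange u hu
    have t1 : ρ u * Real.log (ρ u / f u) ≤ -Real.log ρm :=
      stmt8_term_bound (hρ0 u) (hρ1 u) hm hm1.le hf1
    have t2 : (1 - ρ u) * Real.log ((1 - ρ u) / (1 - f u)) ≤ -Real.log (1 - ρp) :=
      stmt8_term_bound (by linarith [hρ1 u]) (by linarith [hρ0 u]) h1p (by linarith)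
        (by linarith)
    have t3 : Real.log (f' u / m) ≤ f' u / m - 1 :=
      Real.log_le_sub_one_of_pos (div_pos (hpos u hu) hm0)
    simp only [hb, hK]; linarith
  -- integrability of the bound
  have hbint : IntervalIntegrable b volume (-1:ℝ) 1 := by
    apply ContinuousOn.intervalIntegrable
    rw [uIcc_of_le (by norm_num : (-1:ℝ) ≤ 1)]
    exact continuousOn_const.add ((hcont.div_const m).sub continuousOn_const)
  have hf'int : IntervalIntegrable f' volume (-1:ℝ) 1 := by
    apply ContinuousOn.intervalIntegrable
    rw [uIcc_of_le (by norm_num : (-1:ℝ) ≤ 1)]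
    exact hcont
  -- value of ∫ b
  have hftc : (∫ u in (-1:ℝ)..1, f' u) = ρp - ρm := by
    rw [intervalIntegral.integral_eq_sub_of_hasDerivAt (fun u hu => hderiv u
      (by rwa [uIcc_of_le (by norm_num : (-1:ℝ) ≤ 1)] at hu)) hf'int, hfm, hfp]
  have hbval : (∫ u in (-1:ℝ)..1, b u) = 2 * K := by
    simp only [hb]
    rw [intervalIntegral.integral_add intervalIntegrable_const
      ((hf'int.div_const m).sub intervalIntegrable_const),
      intervalIntegral.integral_sub (hf'int.div_const m) intervalIntegrable_const,
      intervalIntegral.integral_div, hftc]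
    simp only [intervalIntegral.integral_const, smul_eq_mul]
    have hne : ρp - ρm ≠ 0 := by linarith
    rw [hmdef]
    field_simp
    ring
  by_cases hint : IntervalIntegrable (fun u =>
      ρ u * Real.log (ρ u / f u)
        + (1 - ρ u) * Real.log ((1 - ρ u) / (1 - f u))
        + Real.log (f' u / ((ρp - ρm)/2))) volume (-1:ℝ) 1
  · calc (∫ u in (-1:ℝ)..1,
          (ρ u * Real.log (ρ u / f u)
            + (1 - ρ u) * Real.log ((1 - ρ u) / (1 - f u))
            + Real.log (f' u / ((ρp - ρm)/2))))
        ≤ ∫ u in (-1:ℝ)..1, b u := by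
          apply intervalIntegral.integral_mono_on (by norm_num) hint hbint
          intro u hu
          exact hptwise u hu
      _ = 2 * K := hbval
  · rw [intervalIntegral.integral_undef hint]
    linarith
end

section
/- Let 0 < ρ₋ < ρ₊ < 1. For fixed ρ ∈ L^∞([-1,1]) with 0 ≤ ρ ≤ 1 a.e., the functional φ ↦ G̃(ρ,φ) := ∫_{-1}^1 [ρ log ρ + (1-ρ)log(1-ρ) + (1-ρ)φ - log(1+e^φ) + log(φ'/((ρ₊-ρ₋)/2))] du is strictly concave on the convex set F̃ = {φ ∈ C¹([-1,1]) : φ(±1) = log(ρ±/(1-ρ±)), φ' > 0}. -/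
open Set MeasureTheory intervalIntegral Real

lemma aux_xlogx (x : ℝ) (h0 : 0 ≤ x) (h1 : x ≤ 1) : |x * Real.log x| ≤ 1 := by
  rcases eq_or_lt_of_le h0 with h | h
  · simp [← h]
  · have hlog : Real.log x ≤ 0 := Real.log_nonpos h0 h1
    have h2 : Real.log x⁻¹ ≤ x⁻¹ - 1 := Real.log_le_sub_one_of_pos (by positivity)
    rw [Real.log_inv] at h2
    have h3 : -Real.log x ≤ x⁻¹ - 1 := by linarith
    have hxinv : x * x⁻¹ = 1 := mul_inv_cancel₀ h.ne'
    have hx : x * Real.log x ≤ 0 := mul_nonpos_of_nonneg_of_nonpos h0 hlog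
    have h4 := mul_le_mul_of_nonneg_left h3 h0
    rw [abs_le]
    constructor <;> nlinarith

lemma aux_logistic_convex : ConvexOn ℝ univ (fun x : ℝ => Real.log (1 + Real.exp x)) := by
  have hd : ∀ x : ℝ, HasDerivAt (fun x : ℝ => Real.log (1 + Real.exp x))
      (Real.exp x / (1 + Real.exp x)) x := by
    intro x
    have h1 : HasDerivAt (fun x : ℝ => 1 + Real.exp x) (Real.exp x) x :=
      (Real.hasDerivAt_exp x).const_add 1
    exact h1.log (by positivity)
  have hdiff : Differentiable ℝ (fun x : ℝ => Real.log (1 + Real.exp x)) :=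
    fun x => (hd x).differentiableAt
  apply Monotone.convexOn_univ_of_deriv hdiff
  have hderiv : deriv (fun x : ℝ => Real.log (1 + Real.exp x))
      = fun x => Real.exp x / (1 + Real.exp x) := funext fun x => (hd x).deriv
  rw [hderiv]
  intro a b hab
  have ha : (0:ℝ) < 1 + Real.exp a := by positivity
  have hb : (0:ℝ) < 1 + Real.exp b := by positivity
  rw [div_le_div_iff₀ ha hb]
  have := Real.exp_le_exp.mpr hab
  nlinarith

lemma aux_intable (ρ : ℝ → ℝ) (hρmeas : Measurable ρ) (hρ0 : ∀ u, 0 ≤ ρ u) (hρ1 : ∀ u, ρ u ≤ 1)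
    (c : ℝ) (hc : 0 < c) (f g : ℝ → ℝ) (hf : ContinuousOn f (Icc (-1:ℝ) 1))
    (hg : ContinuousOn g (Icc (-1:ℝ) 1)) (hgpos : ∀ u ∈ Icc (-1:ℝ) 1, 0 < g u) :
    IntervalIntegrable (fun u => ρ u * Real.log (ρ u) + (1 - ρ u) * Real.log (1 - ρ u)
      + (1 - ρ u) * f u - Real.log (1 + Real.exp (f u)) + Real.log (g u / c))
      volume (-1) 1 := by
  obtain ⟨C, hC⟩ := (isCompact_Icc : IsCompact (Icc (-1:ℝ) 1)).exists_bound_of_continuousOn hf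
  have hM : IntervalIntegrable (fun u => ρ u * Real.log (ρ u) + (1 - ρ u) * Real.log (1 - ρ u)
      + (1 - ρ u) * f u) volume (-1) 1 := by
    rw [intervalIntegrable_iff_integrableOn_Ioc_of_le (by norm_num)]
    have hmeas : AEStronglyMeasurable (fun u => ρ u * Real.log (ρ u)
        + (1 - ρ u) * Real.log (1 - ρ u) + (1 - ρ u) * f u)
        (volume.restrict (Ioc (-1:ℝ) 1)) := by
      refine AEStronglyMeasurable.add (AEStronglyMeasurable.add ?_ ?_) ?_
      · exact (hρmeas.mul (Real.measurable_log.comp hρmeas)).aestronglyMeasurable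
      · exact ((measurable_const.sub hρmeas).mul
          (Real.measurable_log.comp (measurable_const.sub hρmeas))).aestronglyMeasurable
      · exact ((measurable_const.sub hρmeas).aestronglyMeasurable).mul
          ((hf.mono Ioc_subset_Icc_self).aestronglyMeasurable measurableSet_Ioc)
    refine Integrable.mono' (integrable_const (2 + C)) hmeas ?_
    filter_upwards [ae_restrict_mem measurableSet_Ioc] with u hu
    have hu' : u ∈ Icc (-1:ℝ) 1 := Ioc_subset_Icc_self hu
    have b1 : |ρ u * Real.log (ρ u)| ≤ 1 := aux_xlogx _ (hρ0 u) (hρ1 u)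
    have b2 : |(1 - ρ u) * Real.log (1 - ρ u)| ≤ 1 :=
      aux_xlogx _ (by linarith [hρ1 u]) (by linarith [hρ0 u])
    have b3 : |(1 - ρ u) * f u| ≤ C := by
      rw [abs_mul]
      have h1 : |1 - ρ u| ≤ 1 := by rw [abs_le]; constructor <;> [linarith [hρ1 u]; linarith [hρ0 u]]
      have h2 : |f u| ≤ C := hC u hu'
      calc |1 - ρ u| * |f u| ≤ 1 * C := mul_le_mul h1 h2 (abs_nonneg _) (by linarith [abs_nonneg (f u)])
        _ = C := one_mul C
    simp only [Real.norm_eq_abs]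
    calc |ρ u * Real.log (ρ u) + (1 - ρ u) * Real.log (1 - ρ u) + (1 - ρ u) * f u|
        ≤ |ρ u * Real.log (ρ u) + (1 - ρ u) * Real.log (1 - ρ u)| + |(1 - ρ u) * f u| := abs_add_le _ _
      _ ≤ (|ρ u * Real.log (ρ u)| + |(1 - ρ u) * Real.log (1 - ρ u)|) + |(1 - ρ u) * f u| := by
          gcongr; exact abs_add_le _ _
      _ ≤ 2 + C := by linarith
  have hCont : IntervalIntegrable (fun u => -Real.log (1 + Real.exp (f u))
      + Real.log (g u / c)) volume (-1) 1 := by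
    apply ContinuousOn.intervalIntegrable_of_Icc (by norm_num)
    refine ContinuousOn.add (ContinuousOn.neg ?_) ?_
    · exact (continuousOn_const.add (Real.continuous_exp.comp_continuousOn hf)).log
        (fun u _ => ne_of_gt (by simp only [Pi.add_apply, Function.comp_apply]; positivity))
    · exact (hg.div_const c).log (fun u hu => div_ne_zero (hgpos u hu).ne' hc.ne')
  have heq : (fun u => ρ u * Real.log (ρ u) + (1 - ρ u) * Real.log (1 - ρ u)
      + (1 - ρ u) * f u - Real.log (1 + Real.exp (f u)) + Real.log (g u / c))
      = (fun u => (ρ u * Real.log (ρ u) + (1 - ρ u) * Real.log (1 - ρ u) + (1 - ρ u) * f u)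
        + (-Real.log (1 + Real.exp (f u)) + Real.log (g u / c))) := by
    funext u; ring
  rw [heq]
  exact hM.add hCont

/-- The functional `G̃(ρ, φ)` expressed in terms of `φ` and its derivative `φ'`. -/
noncomputable def Gtilde (ρm ρp : ℝ) (ρ φ φ' : ℝ → ℝ) : ℝ :=
  ∫ u in (-1:ℝ)..1,
    (ρ u * Real.log (ρ u) + (1 - ρ u) * Real.log (1 - ρ u)
      + (1 - ρ u) * φ u - Real.log (1 + Real.exp (φ u))
      + Real.log (φ' u / ((ρp - ρm)/2)))

/-- For fixed `ρ`, the functional `φ ↦ G̃(ρ,φ)` is strictly concave on the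
convex set `F̃` of strictly increasing C¹ functions with boundary values `log(ρ±/(1-ρ±))`. -/
theorem stmt9
    (ρm ρp : ℝ) (hm : 0 < ρm) (hmp : ρm < ρp) (hp : ρp < 1)
    (ρ : ℝ → ℝ) (hρmeas : Measurable ρ) (hρ0 : ∀ u, 0 ≤ ρ u) (hρ1 : ∀ u, ρ u ≤ 1)
    (φ ψ φ' ψ' : ℝ → ℝ)
    (hφ : ∀ u ∈ Icc (-1:ℝ) 1, HasDerivAt φ (φ' u) u)
    (hψ : ∀ u ∈ Icc (-1:ℝ) 1, HasDerivAt ψ (ψ' u) u)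
    (hφ'cont : ContinuousOn φ' (Icc (-1:ℝ) 1))
    (hψ'cont : ContinuousOn ψ' (Icc (-1:ℝ) 1))
    (hφm : φ (-1) = Real.log (ρm / (1 - ρm))) (hφp : φ 1 = Real.log (ρp / (1 - ρp)))
    (hψm : ψ (-1) = Real.log (ρm / (1 - ρm))) (hψp : ψ 1 = Real.log (ρp / (1 - ρp)))
    (hφ'pos : ∀ u ∈ Icc (-1:ℝ) 1, 0 < φ' u)
    (hψ'pos : ∀ u ∈ Icc (-1:ℝ) 1, 0 < ψ' u)
    (hne : ∃ u ∈ Icc (-1:ℝ) 1, φ u ≠ ψ u)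
    (t : ℝ) (ht : t ∈ Ioo (0:ℝ) 1) :
    t * Gtilde ρm ρp ρ φ φ' + (1 - t) * Gtilde ρm ρp ρ ψ ψ'
      < Gtilde ρm ρp ρ (fun u => t * φ u + (1 - t) * ψ u)
          (fun u => t * φ' u + (1 - t) * ψ' u) := by
  obtain ⟨ht0, ht1⟩ := ht
  have hc : (0:ℝ) < (ρp - ρm)/2 := by linarith
  have hφcont : ContinuousOn φ (Icc (-1:ℝ) 1) :=
    fun u hu => ((hφ u hu).continuousAt).continuousWithinAt
  have hψcont : ContinuousOn ψ (Icc (-1:ℝ) 1) :=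
    fun u hu => ((hψ u hu).continuousAt).continuousWithinAt
  have hχcont : ContinuousOn (fun u => t * φ u + (1 - t) * ψ u) (Icc (-1:ℝ) 1) :=
    (continuousOn_const.mul hφcont).add (continuousOn_const.mul hψcont)
  have hχ'cont : ContinuousOn (fun u => t * φ' u + (1 - t) * ψ' u) (Icc (-1:ℝ) 1) :=
    (continuousOn_const.mul hφ'cont).add (continuousOn_const.mul hψ'cont)
  have hχ'pos : ∀ u ∈ Icc (-1:ℝ) 1, 0 < t * φ' u + (1 - t) * ψ' u := fun u hu => by
    have := hφ'pos u hu; have := hψ'pos u hu; nlinarith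
  -- integrability
  have hFφ := aux_intable ρ hρmeas hρ0 hρ1 _ hc φ φ' hφcont hφ'cont hφ'pos
  have hFψ := aux_intable ρ hρmeas hρ0 hρ1 _ hc ψ ψ' hψcont hψ'cont hψ'pos
  have hFχ := aux_intable ρ hρmeas hρ0 hρ1 _ hc _ _ hχcont hχ'cont hχ'pos
  have hcombo := (hFφ.const_mul t).add (hFψ.const_mul (1 - t))
  -- there is a point where the derivatives differ
  have hne' : ∃ u ∈ Icc (-1:ℝ) 1, φ' u ≠ ψ' u := by
    by_contra h
    push_neg at h
    obtain ⟨u₀, hu₀, hneu⟩ := hne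
    apply hneu
    refine eq_of_has_deriv_right_eq (f' := φ')
      (fun x hx => (hφ x (mem_Icc_of_Ico hx)).hasDerivWithinAt)
      (fun x hx => (h x (mem_Icc_of_Ico hx)) ▸ (hψ x (mem_Icc_of_Ico hx)).hasDerivWithinAt)
      hφcont hψcont (hφm.trans hψm.symm) u₀ hu₀
  obtain ⟨u₀, hu₀, hd⟩ := hne'
  -- the defect function E
  set E : ℝ → ℝ := fun u =>
    (t * Real.log (1 + Real.exp (φ u)) + (1 - t) * Real.log (1 + Real.exp (ψ u))
      - Real.log (1 + Real.exp (t * φ u + (1 - t) * ψ u)))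
    + (Real.log (t * φ' u + (1 - t) * ψ' u)
      - t * Real.log (φ' u) - (1 - t) * Real.log (ψ' u)) with hE
  have hEcont : ContinuousOn E (Icc (-1:ℝ) 1) := by
    rw [hE]
    refine ContinuousOn.add (ContinuousOn.sub (ContinuousOn.add ?_ ?_) ?_)
      (ContinuousOn.sub (ContinuousOn.sub ?_ ?_) ?_)
    · exact continuousOn_const.mul ((continuousOn_const.add
        (Real.continuous_exp.comp_continuousOn hφcont)).log
        (fun u _ => ne_of_gt (by simp only [Pi.add_apply, Function.comp_apply]; positivity)))
    · exact continuousOn_const.mul ((continuousOn_const.add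
        (Real.continuous_exp.comp_continuousOn hψcont)).log
        (fun u _ => ne_of_gt (by simp only [Pi.add_apply, Function.comp_apply]; positivity)))
    · exact (continuousOn_const.add
        (Real.continuous_exp.comp_continuousOn hχcont)).log
        (fun u _ => ne_of_gt (by simp only [Pi.add_apply, Function.comp_apply]; positivity))
    · exact hχ'cont.log (fun u hu => (hχ'pos u hu).ne')
    · exact continuousOn_const.mul (hφ'cont.log (fun u hu => (hφ'pos u hu).ne'))
    · exact continuousOn_const.mul (hψ'cont.log (fun u hu => (hψ'pos u hu).ne'))
  have hEnonneg : ∀ u ∈ Icc (-1:ℝ) 1, 0 ≤ E u := by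
    intro u hu
    have part1 : Real.log (1 + Real.exp (t * φ u + (1 - t) * ψ u))
        ≤ t * Real.log (1 + Real.exp (φ u)) + (1 - t) * Real.log (1 + Real.exp (ψ u)) := by
      have := aux_logistic_convex.2 (mem_univ (φ u)) (mem_univ (ψ u)) ht0.le
        (by linarith : (0:ℝ) ≤ 1 - t) (by ring : t + (1 - t) = 1)
      simpa [smul_eq_mul] using this
    have part2 : t * Real.log (φ' u) + (1 - t) * Real.log (ψ' u)
        ≤ Real.log (t * φ' u + (1 - t) * ψ' u) := by
      have := (strictConcaveOn_log_Ioi.concaveOn).2 (hφ'pos u hu) (hψ'pos u hu) ht0.le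
        (by linarith : (0:ℝ) ≤ 1 - t) (by ring : t + (1 - t) = 1)
      simpa [smul_eq_mul] using this
    rw [hE]; dsimp only; linarith
  have hEpos : 0 < E u₀ := by
    have part1 : Real.log (1 + Real.exp (t * φ u₀ + (1 - t) * ψ u₀))
        ≤ t * Real.log (1 + Real.exp (φ u₀)) + (1 - t) * Real.log (1 + Real.exp (ψ u₀)) := by
      have := aux_logistic_convex.2 (mem_univ (φ u₀)) (mem_univ (ψ u₀)) ht0.le
        (by linarith : (0:ℝ) ≤ 1 - t) (by ring : t + (1 - t) = 1)
      simpa [smul_eq_mul] using this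
    have part2 : t * Real.log (φ' u₀) + (1 - t) * Real.log (ψ' u₀)
        < Real.log (t * φ' u₀ + (1 - t) * ψ' u₀) := by
      have := strictConcaveOn_log_Ioi.2 (hφ'pos u₀ hu₀) (hψ'pos u₀ hu₀) hd ht0
        (by linarith : (0:ℝ) < 1 - t) (by ring : t + (1 - t) = 1)
      simpa [smul_eq_mul] using this
    rw [hE]; dsimp only; linarith
  have hintpos : 0 < ∫ u in (-1:ℝ)..1, E u :=
    intervalIntegral.integral_pos (by norm_num) hEcont
      (fun x hx => hEnonneg x (Ioc_subset_Icc_self hx)) ⟨u₀, hu₀, hEpos⟩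
  -- identify the difference of the functionals with ∫ E
  have e1 : t * Gtilde ρm ρp ρ φ φ' + (1 - t) * Gtilde ρm ρp ρ ψ ψ'
      = ∫ u in (-1:ℝ)..1,
          (t * (ρ u * Real.log (ρ u) + (1 - ρ u) * Real.log (1 - ρ u)
            + (1 - ρ u) * φ u - Real.log (1 + Real.exp (φ u))
            + Real.log (φ' u / ((ρp - ρm)/2)))
          + (1 - t) * (ρ u * Real.log (ρ u) + (1 - ρ u) * Real.log (1 - ρ u)
            + (1 - ρ u) * ψ u - Real.log (1 + Real.exp (ψ u))
            + Real.log (ψ' u / ((ρp - ρm)/2)))) := by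
    rw [intervalIntegral.integral_add (hFφ.const_mul t) (hFψ.const_mul (1 - t)),
      intervalIntegral.integral_const_mul, intervalIntegral.integral_const_mul]
    rfl
  have e2 : Gtilde ρm ρp ρ (fun u => t * φ u + (1 - t) * ψ u)
        (fun u => t * φ' u + (1 - t) * ψ' u)
      - (t * Gtilde ρm ρp ρ φ φ' + (1 - t) * Gtilde ρm ρp ρ ψ ψ')
      = ∫ u in (-1:ℝ)..1, E u := by
    rw [e1, Gtilde, ← intervalIntegral.integral_sub hFχ hcombo]
    apply intervalIntegral.integral_congr
    intro u hu
    rw [uIcc_of_le (by norm_num : (-1:ℝ) ≤ 1)] at hu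
    rw [hE]
    dsimp only
    rw [Real.log_div (hχ'pos u hu).ne' hc.ne', Real.log_div (hφ'pos u hu).ne' hc.ne',
      Real.log_div (hψ'pos u hu).ne' hc.ne']
    ring
  linarith
end

section
/- Let 0 < ρ₋ < ρ₊ < 1 and let ρ ∈ C([-1,1]) with 0 ≤ ρ ≤ 1. Suppose φ ∈ C²([-1,1]), strictly increasing, satisfies φ''(u)/(φ'(u))² + 1/(1+e^{φ(u)}) = ρ(u) on (-1,1) with φ(±1) = log(ρ±/(1-ρ±)). Then φ is the unique maximizer of G̃(ρ,·) over F̃: for every ψ ∈ F̃ with ψ ≠ φ, G̃(ρ,ψ) < G̃(ρ,φ). -/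
open Set MeasureTheory intervalIntegral Real


lemma logistic_hasDerivAt (c t : ℝ) :
    HasDerivAt (fun t => Real.log (1 + Real.exp t) - c * t)
      (Real.exp t / (1 + Real.exp t) - c) t := by
  have h1 : (0:ℝ) < 1 + Real.exp t := by positivity
  have h2 : HasDerivAt (fun t => 1 + Real.exp t) (Real.exp t) t :=
    (Real.hasDerivAt_exp t).const_add 1
  exact (h2.log h1.ne').sub (by simpa using (hasDerivAt_id t).const_mul c)

lemma sigmoid_lt {s t : ℝ} (h : s < t) :
    Real.exp s / (1 + Real.exp s) < Real.exp t / (1 + Real.exp t) := by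
  have h1 : (0:ℝ) < 1 + Real.exp s := by positivity
  have h2 : (0:ℝ) < 1 + Real.exp t := by positivity
  rw [div_lt_div_iff₀ h1 h2]
  nlinarith [Real.exp_lt_exp.mpr h, Real.exp_pos s, Real.exp_pos t]

/-- Strict tangent-line inequality for the convex function `log (1 + e^x)`. -/
lemma tangent_lt (x y : ℝ) (hxy : x ≠ y) :
    Real.exp x / (1 + Real.exp x) * (y - x)
      < Real.log (1 + Real.exp y) - Real.log (1 + Real.exp x) := by
  set c := Real.exp x / (1 + Real.exp x) with hc
  set F : ℝ → ℝ := fun t => Real.log (1 + Real.exp t) - c * t with hF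
  have hd : ∀ t, deriv F t = Real.exp t / (1 + Real.exp t) - c := fun t =>
    (logistic_hasDerivAt c t).deriv
  rcases hxy.lt_or_gt with h | h
  · have hmono : StrictMonoOn F (Ici x) := by
      apply strictMonoOn_of_deriv_pos (convex_Ici x)
        (fun t _ => ((logistic_hasDerivAt c t).continuousAt).continuousWithinAt)
      intro t ht
      rw [interior_Ici] at ht
      rw [hd t]
      have := _root_.sigmoid_lt (ht : x < t)
      linarith
    have := hmono (self_mem_Ici) (le_of_lt h : x ≤ y) h
    simp only [hF] at this
    linarith
  · have hmono : StrictAntiOn F (Iic x) := by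
      apply strictAntiOn_of_deriv_neg (convex_Iic x)
        (fun t _ => ((logistic_hasDerivAt c t).continuousAt).continuousWithinAt)
      intro t ht
      rw [interior_Iic] at ht
      rw [hd t]
      have := _root_.sigmoid_lt (ht : t < x)
      linarith
    have := hmono (le_of_lt h : y ≤ x) (self_mem_Iic) h
    simp only [hF] at this
    linarith

lemma tangent_le (x y : ℝ) :
    Real.exp x / (1 + Real.exp x) * (y - x)
      ≤ Real.log (1 + Real.exp y) - Real.log (1 + Real.exp x) := by
  rcases eq_or_ne x y with rfl | h
  · simp
  · exact (tangent_lt x y h).le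

lemma integral_pos_of_nonneg_of_pos {a b : ℝ} (hab : a < b) {g : ℝ → ℝ}
    (hg : ContinuousOn g (Icc a b)) (h0 : ∀ x ∈ Icc a b, 0 ≤ g x)
    {x0 : ℝ} (hx0 : x0 ∈ Icc a b) (hpos : 0 < g x0) :
    0 < ∫ x in a..b, g x := by
  obtain ⟨δ, hδ, hδ'⟩ := Metric.continuousWithinAt_iff.mp (hg x0 hx0) (g x0 / 2) (by linarith)
  set c := max a (x0 - δ/2) with hcdef
  set d := min b (x0 + δ/2) with hddef
  have hax0 := hx0.1
  have hx0b := hx0.2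
  have hac : a ≤ c := le_max_left _ _
  have hdb : d ≤ b := min_le_left _ _
  have hcd : c < d := by
    apply max_lt <;> apply lt_min
    · exact hab
    · linarith
    · linarith
    · linarith
  have hsub : Icc c d ⊆ Icc a b := Icc_subset_Icc hac hdb
  have hlow : ∀ y ∈ Icc c d, g x0 / 2 ≤ g y := by
    intro y hy
    have hy' : y ∈ Icc a b := hsub hy
    have hdist : dist y x0 < δ := by
      rw [Real.dist_eq, abs_lt]
      constructor
      · have : x0 - δ/2 ≤ c := le_max_right _ _
        have := hy.1; linarith
      · have : d ≤ x0 + δ/2 := min_le_right _ _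
        have := hy.2; linarith
    have := hδ' hy' hdist
    rw [Real.dist_eq, abs_lt] at this
    linarith [this.1]
  have hint : IntervalIntegrable g volume a b :=
    (hg.mono (by rw [uIcc_of_le hab.le])).intervalIntegrable
  have hint1 : IntervalIntegrable g volume a c :=
    hint.mono_set (by rw [uIcc_of_le hab.le, uIcc_of_le hac]; exact Icc_subset_Icc le_rfl (hcd.le.trans hdb))
  have hint2 : IntervalIntegrable g volume c d :=
    hint.mono_set (by rw [uIcc_of_le hab.le, uIcc_of_le hcd.le]; exact hsub)
  have hint3 : IntervalIntegrable g volume d b :=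
    hint.mono_set (by rw [uIcc_of_le hab.le, uIcc_of_le hdb]; exact Icc_subset_Icc (hac.trans hcd.le) le_rfl)
  have hsplit : ∫ x in a..b, g x = (∫ x in a..c, g x) + ((∫ x in c..d, g x) + ∫ x in d..b, g x) := by
    rw [intervalIntegral.integral_add_adjacent_intervals hint2 hint3,
      intervalIntegral.integral_add_adjacent_intervals hint1 (hint2.trans hint3)]
  have h1 : 0 ≤ ∫ x in a..c, g x :=
    intervalIntegral.integral_nonneg hac (fun u hu => h0 u (Icc_subset_Icc le_rfl (hcd.le.trans hdb) hu))
  have h3 : 0 ≤ ∫ x in d..b, g x :=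
    intervalIntegral.integral_nonneg hdb (fun u hu => h0 u (Icc_subset_Icc (hac.trans hcd.le) le_rfl hu))
  have h2 : (d - c) * (g x0 / 2) ≤ ∫ x in c..d, g x := by
    have := intervalIntegral.integral_mono_on hcd.le (_root_.intervalIntegrable_const (c := g x0 / 2)) hint2 hlow
    simp only [intervalIntegral.integral_const, smul_eq_mul] at this
    linarith
  have : 0 < (d - c) * (g x0 / 2) := by
    apply mul_pos <;> linarith
  linarith [hsplit]


/-- A C², strictly increasing solution `φ` of the Euler–Lagrange equation
`φ''/(φ')² + 1/(1+e^φ) = ρ` with boundary values `log(ρ±/(1-ρ±))` is the unique maximizer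
of `G̃(ρ,·)` over `F̃`: any other admissible `ψ` gives a strictly smaller value. -/
theorem stmt10
    (ρm ρp : ℝ) (hm : 0 < ρm) (hmp : ρm < ρp) (hp : ρp < 1)
    (ρ : ℝ → ℝ) (hρcont : ContinuousOn ρ (Icc (-1:ℝ) 1))
    (hρ0 : ∀ u, 0 ≤ ρ u) (hρ1 : ∀ u, ρ u ≤ 1)
    (φ φ' φ'' : ℝ → ℝ)
    (hφ : ∀ u ∈ Icc (-1:ℝ) 1, HasDerivAt φ (φ' u) u)
    (hφ' : ∀ u ∈ Icc (-1:ℝ) 1, HasDerivAt φ' (φ'' u) u)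
    (hφ''cont : ContinuousOn φ'' (Icc (-1:ℝ) 1))
    (hφ'pos : ∀ u ∈ Icc (-1:ℝ) 1, 0 < φ' u)
    (hEL : ∀ u ∈ Ioo (-1:ℝ) 1,
      φ'' u / (φ' u)^2 + 1 / (1 + Real.exp (φ u)) = ρ u)
    (hφm : φ (-1) = Real.log (ρm / (1 - ρm))) (hφp : φ 1 = Real.log (ρp / (1 - ρp)))
    (ψ ψ' : ℝ → ℝ)
    (hψ : ∀ u ∈ Icc (-1:ℝ) 1, HasDerivAt ψ (ψ' u) u)
    (hψ'cont : ContinuousOn ψ' (Icc (-1:ℝ) 1))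
    (hψ'pos : ∀ u ∈ Icc (-1:ℝ) 1, 0 < ψ' u)
    (hψm : ψ (-1) = Real.log (ρm / (1 - ρm))) (hψp : ψ 1 = Real.log (ρp / (1 - ρp)))
    (hne : ∃ u ∈ Icc (-1:ℝ) 1, ψ u ≠ φ u) :
    Gtilde ρm ρp ρ ψ ψ' < Gtilde ρm ρp ρ φ φ' := by
  have hc : (0:ℝ) < (ρp - ρm)/2 := by linarith
  have hab : (-1:ℝ) ≤ 1 := by norm_num
  set fψ : ℝ → ℝ := fun u =>
    ρ u * Real.log (ρ u) + (1 - ρ u) * Real.log (1 - ρ u)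
      + (1 - ρ u) * ψ u - Real.log (1 + Real.exp (ψ u))
      + Real.log (ψ' u / ((ρp - ρm)/2)) with hfψdef
  set fφ : ℝ → ℝ := fun u =>
    ρ u * Real.log (ρ u) + (1 - ρ u) * Real.log (1 - ρ u)
      + (1 - ρ u) * φ u - Real.log (1 + Real.exp (φ u))
      + Real.log (φ' u / ((ρp - ρm)/2)) with hfφdef
  set B : ℝ → ℝ := fun u =>
    (ψ' u - φ' u) / φ' u + (1/(1 + Real.exp (φ u)) - ρ u) * (ψ u - φ u) with hBdef
  have hGψ : Gtilde ρm ρp ρ ψ ψ' = ∫ u in (-1:ℝ)..1, fψ u := rfl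
  have hGφ : Gtilde ρm ρp ρ φ φ' = ∫ u in (-1:ℝ)..1, fφ u := rfl
  -- continuity facts
  have hφc : ContinuousOn φ (Icc (-1:ℝ) 1) :=
    fun u hu => ((hφ u hu).continuousAt).continuousWithinAt
  have hψc : ContinuousOn ψ (Icc (-1:ℝ) 1) :=
    fun u hu => ((hψ u hu).continuousAt).continuousWithinAt
  have hφ'c : ContinuousOn φ' (Icc (-1:ℝ) 1) :=
    fun u hu => ((hφ' u hu).continuousAt).continuousWithinAt
  have hEφpos : ∀ u : ℝ, (0:ℝ) < 1 + Real.exp (φ u) := fun u => by positivity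
  have hEψpos : ∀ u : ℝ, (0:ℝ) < 1 + Real.exp (ψ u) := fun u => by positivity
  have hEφ : ContinuousOn (fun u => 1 + Real.exp (φ u)) (Icc (-1:ℝ) 1) :=
    continuousOn_const.add (Real.continuous_exp.comp_continuousOn hφc)
  have hEψ : ContinuousOn (fun u => 1 + Real.exp (ψ u)) (Icc (-1:ℝ) 1) :=
    continuousOn_const.add (Real.continuous_exp.comp_continuousOn hψc)
  have hEnt : ContinuousOn
      (fun u => ρ u * Real.log (ρ u) + (1 - ρ u) * Real.log (1 - ρ u)) (Icc (-1:ℝ) 1) :=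
    (Real.continuous_mul_log.comp_continuousOn hρcont).add
      (Real.continuous_mul_log.comp_continuousOn (continuousOn_const.sub hρcont))
  have hfψcont : ContinuousOn fψ (Icc (-1:ℝ) 1) := by
    rw [hfψdef]
    exact ((hEnt.add ((continuousOn_const.sub hρcont).mul hψc)).sub
        (hEψ.log (fun u hu => (hEψpos u).ne'))).add
      ((hψ'cont.div_const _).log (fun u hu => (div_pos (hψ'pos u hu) hc).ne'))
  have hfφcont : ContinuousOn fφ (Icc (-1:ℝ) 1) := by
    rw [hfφdef]
    exact ((hEnt.add ((continuousOn_const.sub hρcont).mul hφc)).sub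
        (hEφ.log (fun u hu => (hEφpos u).ne'))).add
      ((hφ'c.div_const _).log (fun u hu => (div_pos (hφ'pos u hu) hc).ne'))
  have hBcont : ContinuousOn B (Icc (-1:ℝ) 1) := by
    rw [hBdef]
    exact ((hψ'cont.sub hφ'c).div hφ'c (fun u hu => (hφ'pos u hu).ne')).add
      (((continuousOn_const.div hEφ (fun u hu => (hEφpos u).ne')).sub hρcont).mul
        (hψc.sub hφc))
  -- the key algebraic identity
  have hid : ∀ u ∈ Icc (-1:ℝ) 1, fφ u + B u - fψ u =
      ((ψ' u - φ' u)/φ' u - (Real.log (ψ' u) - Real.log (φ' u)))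
      + ((Real.log (1 + Real.exp (ψ u)) - Real.log (1 + Real.exp (φ u)))
          - Real.exp (φ u)/(1 + Real.exp (φ u)) * (ψ u - φ u)) := by
    intro u hu
    have h1 : Real.log (ψ' u / ((ρp - ρm)/2)) = Real.log (ψ' u) - Real.log ((ρp - ρm)/2) :=
      Real.log_div (hψ'pos u hu).ne' hc.ne'
    have h2 : Real.log (φ' u / ((ρp - ρm)/2)) = Real.log (φ' u) - Real.log ((ρp - ρm)/2) :=
      Real.log_div (hφ'pos u hu).ne' hc.ne'
    have h3 : (1:ℝ) + Real.exp (φ u) ≠ 0 := (hEφpos u).ne'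
    have h4 : φ' u ≠ 0 := (hφ'pos u hu).ne'
    simp only [hfφdef, hfψdef, hBdef, h1, h2]
    field_simp
    ring
  -- pointwise nonnegativity
  have hge : ∀ u ∈ Icc (-1:ℝ) 1, 0 ≤ fφ u + B u - fψ u := by
    intro u hu
    rw [hid u hu]
    have hx : 0 < ψ' u / φ' u := div_pos (hψ'pos u hu) (hφ'pos u hu)
    have e1 := Real.log_le_sub_one_of_pos hx
    rw [Real.log_div (hψ'pos u hu).ne' (hφ'pos u hu).ne'] at e1
    have h4 : φ' u ≠ 0 := (hφ'pos u hu).ne'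
    have e1' : Real.log (ψ' u) - Real.log (φ' u) ≤ (ψ' u - φ' u)/φ' u := by
      have : ψ' u / φ' u - 1 = (ψ' u - φ' u)/φ' u := by field_simp
      linarith
    have e2 := tangent_le (φ u) (ψ u)
    linarith
  -- strict positivity at the witness
  obtain ⟨u0, hu0, hu0ne⟩ := hne
  have hgt : 0 < fφ u0 + B u0 - fψ u0 := by
    rw [hid u0 hu0]
    have hx : 0 < ψ' u0 / φ' u0 := div_pos (hψ'pos u0 hu0) (hφ'pos u0 hu0)
    have e1 := Real.log_le_sub_one_of_pos hx
    rw [Real.log_div (hψ'pos u0 hu0).ne' (hφ'pos u0 hu0).ne'] at e1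
    have h4 : φ' u0 ≠ 0 := (hφ'pos u0 hu0).ne'
    have e1' : Real.log (ψ' u0) - Real.log (φ' u0) ≤ (ψ' u0 - φ' u0)/φ' u0 := by
      have : ψ' u0 / φ' u0 - 1 = (ψ' u0 - φ' u0)/φ' u0 := by field_simp
      linarith
    have e2 := tangent_lt (φ u0) (ψ u0) (fun h => hu0ne (h.symm))
    linarith
  -- ∫ B = 0 by the fundamental theorem of calculus and the EL equation
  have hBint : IntervalIntegrable B volume (-1:ℝ) 1 :=
    (hBcont.mono (by rw [uIcc_of_le hab])).intervalIntegrable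
  have hFTC : (∫ u in (-1:ℝ)..1, B u) = 0 := by
    have hmain : (∫ u in (-1:ℝ)..1, B u)
        = (ψ 1 - φ 1)/φ' 1 - (ψ (-1) - φ (-1))/φ' (-1) := by
      apply intervalIntegral.integral_eq_sub_of_hasDerivAt_of_le hab
        (f := fun u => (ψ u - φ u)/φ' u)
      · exact (hψc.sub hφc).div hφ'c (fun u hu => (hφ'pos u hu).ne')
      · intro x hx
        have hx' : x ∈ Icc (-1:ℝ) 1 := Ioo_subset_Icc_self hx
        have h4 : φ' x ≠ 0 := (hφ'pos x hx').ne'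
        have h3 : (1:ℝ) + Real.exp (φ x) ≠ 0 := (hEφpos x).ne'
        have hd : HasDerivAt (fun u => (ψ u - φ u) / φ' u)
            (((ψ' x - φ' x) * φ' x - (ψ x - φ x) * φ'' x) / φ' x ^ 2) x :=
          ((hψ x hx').sub (hφ x hx')).div (hφ' x hx') h4
        refine hd.congr_deriv ?_
        have hel := hEL x hx
        have hφ''eq : φ'' x = (ρ x - 1/(1 + Real.exp (φ x))) * (φ' x)^2 := by
          have : φ'' x / (φ' x)^2 = ρ x - 1/(1 + Real.exp (φ x)) := by linarith
          rw [div_eq_iff (pow_ne_zero 2 h4)] at this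
          exact this
        simp only [hBdef]
        rw [hφ''eq]
        field_simp
        ring
      · exact hBint
    rw [hmain, hψp, hφp, hψm, hφm]
    simp
  -- assemble
  have hfψint : IntervalIntegrable fψ volume (-1:ℝ) 1 :=
    (hfψcont.mono (by rw [uIcc_of_le hab])).intervalIntegrable
  have hfφint : IntervalIntegrable fφ volume (-1:ℝ) 1 :=
    (hfφcont.mono (by rw [uIcc_of_le hab])).intervalIntegrable
  have hgpos : 0 < ∫ u in (-1:ℝ)..1, (fφ u + B u - fψ u) := by
    apply integral_pos_of_nonneg_of_pos (by norm_num : (-1:ℝ) < 1)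
      ((hfφcont.add hBcont).sub hfψcont) hge hu0 hgt
  have hsplit : (∫ u in (-1:ℝ)..1, (fφ u + B u - fψ u))
      = (∫ u in (-1:ℝ)..1, fφ u) + (∫ u in (-1:ℝ)..1, B u) - ∫ u in (-1:ℝ)..1, fψ u := by
    rw [intervalIntegral.integral_sub (hfφint.add hBint) hfψint,
      intervalIntegral.integral_add hfφint hBint]
  rw [hGψ, hGφ]
  rw [hsplit, hFTC] at hgpos
  linarith
end

section
/- Hamilton–Jacobi identity: Let ρ, F ∈ C²([-1,1]) with ρ(±1) = F(±1) = ρ±, 0 < δ ≤ ρ, F ≤ 1-δ, F strictly increasing, and F'' = (ρ - F)(F')²/(F(1-F)) on (-1,1). Set Γ(u) = log(ρ(u)/(1-ρ(u))) - log(F(u)/(1-F(u))). Then ∫_{-1}^1 ρ(1-ρ)(Γ')² du + ∫_{-1}^1 ρ'' Γ du = 0. -/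
open Set MeasureTheory intervalIntegral Real

/-- Hamilton–Jacobi identity. With `Γ = log(ρ/(1-ρ)) - log(F/(1-F))`,
`∫ ρ(1-ρ)(Γ')² + ∫ ρ'' Γ = 0` whenever `F` solves the Euler–Lagrange equation for `ρ`. -/
theorem stmt11
    (ρm ρp δ : ℝ) (hm : 0 < ρm) (hmp : ρm < ρp) (hp : ρp < 1) (hδ : 0 < δ)
    (ρ ρ' ρ'' F F' F'' : ℝ → ℝ)
    (hρ : ∀ u ∈ Icc (-1:ℝ) 1, HasDerivAt ρ (ρ' u) u)
    (hρ' : ∀ u ∈ Icc (-1:ℝ) 1, HasDerivAt ρ' (ρ'' u) u)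
    (hρ''cont : ContinuousOn ρ'' (Icc (-1:ℝ) 1))
    (hF : ∀ u ∈ Icc (-1:ℝ) 1, HasDerivAt F (F' u) u)
    (hF' : ∀ u ∈ Icc (-1:ℝ) 1, HasDerivAt F' (F'' u) u)
    (hF''cont : ContinuousOn F'' (Icc (-1:ℝ) 1))
    (hρbm : ρ (-1) = ρm) (hρbp : ρ 1 = ρp)
    (hFbm : F (-1) = ρm) (hFbp : F 1 = ρp)
    (hρbd : ∀ u ∈ Icc (-1:ℝ) 1, δ ≤ ρ u ∧ ρ u ≤ 1 - δ)
    (hFbd : ∀ u ∈ Icc (-1:ℝ) 1, δ ≤ F u ∧ F u ≤ 1 - δ)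
    (hF'pos : ∀ u ∈ Icc (-1:ℝ) 1, 0 < F' u)
    (hODE : ∀ u ∈ Ioo (-1:ℝ) 1,
      F'' u = (ρ u - F u) * (F' u)^2 / (F u * (1 - F u))) :
    (∫ u in (-1:ℝ)..1, ρ u * (1 - ρ u) *
        (deriv (fun v => Real.log (ρ v / (1 - ρ v)) - Real.log (F v / (1 - F v))) u)^2)
      + (∫ u in (-1:ℝ)..1, ρ'' u *
          (Real.log (ρ u / (1 - ρ u)) - Real.log (F u / (1 - F u)))) = 0 := by
  have h11 : (-1:ℝ) ≤ 1 := by norm_num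
  have hmem : ∀ u ∈ Icc (-1:ℝ) 1, 0 < ρ u ∧ ρ u < 1 ∧ 0 < F u ∧ F u < 1 := by
    intro u hu
    obtain ⟨a1, a2⟩ := hρbd u hu
    obtain ⟨a3, a4⟩ := hFbd u hu
    exact ⟨lt_of_lt_of_le hδ a1, by linarith, lt_of_lt_of_le hδ a3, by linarith⟩
  set Γ : ℝ → ℝ := fun v => Real.log (ρ v / (1 - ρ v)) - Real.log (F v / (1 - F v))
    with hΓdef
  set G : ℝ → ℝ := fun u => ρ' u / (ρ u * (1 - ρ u)) - F' u / (F u * (1 - F u))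
    with hGdef
  -- derivative of Γ
  have hΓderiv : ∀ u ∈ Icc (-1:ℝ) 1, HasDerivAt Γ (G u) u := by
    intro u hu
    obtain ⟨a1, a2, a3, a4⟩ := hmem u hu
    have hρne : ρ u ≠ 0 := ne_of_gt a1
    have h1ρne : (1:ℝ) - ρ u ≠ 0 := by linarith
    have hFne : F u ≠ 0 := ne_of_gt a3
    have h1Fne : (1:ℝ) - F u ≠ 0 := by linarith
    have hq1 : HasDerivAt (fun v => ρ v / (1 - ρ v))
        ((ρ' u * (1 - ρ u) - ρ u * (0 - ρ' u)) / (1 - ρ u)^2) u :=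
      (hρ u hu).div ((hasDerivAt_const u (1:ℝ)).sub (hρ u hu)) h1ρne
    have hq2 : HasDerivAt (fun v => F v / (1 - F v))
        ((F' u * (1 - F u) - F u * (0 - F' u)) / (1 - F u)^2) u :=
      (hF u hu).div ((hasDerivAt_const u (1:ℝ)).sub (hF u hu)) h1Fne
    have hne1 : ρ u / (1 - ρ u) ≠ 0 := div_ne_zero hρne h1ρne
    have hne2 : F u / (1 - F u) ≠ 0 := div_ne_zero hFne h1Fne
    have h := (hq1.log hne1).sub (hq2.log hne2)
    convert h using 1
    · rfl
    · rfl
    · rfl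
    rw [hGdef]
    field_simp
    ring
  -- continuity pieces
  have hρc : ContinuousOn ρ (Icc (-1:ℝ) 1) :=
    fun u hu => (hρ u hu).continuousAt.continuousWithinAt
  have hρ'c : ContinuousOn ρ' (Icc (-1:ℝ) 1) :=
    fun u hu => (hρ' u hu).continuousAt.continuousWithinAt
  have hFc : ContinuousOn F (Icc (-1:ℝ) 1) :=
    fun u hu => (hF u hu).continuousAt.continuousWithinAt
  have hF'c : ContinuousOn F' (Icc (-1:ℝ) 1) :=
    fun u hu => (hF' u hu).continuousAt.continuousWithinAt
  have hρden : ∀ u ∈ Icc (-1:ℝ) 1, ρ u * (1 - ρ u) ≠ 0 := by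
    intro u hu
    obtain ⟨a1, a2, a3, a4⟩ := hmem u hu
    exact mul_ne_zero (ne_of_gt a1) (by linarith)
  have hFden : ∀ u ∈ Icc (-1:ℝ) 1, F u * (1 - F u) ≠ 0 := by
    intro u hu
    obtain ⟨a1, a2, a3, a4⟩ := hmem u hu
    exact mul_ne_zero (ne_of_gt a3) (by linarith)
  have hGc : ContinuousOn G (Icc (-1:ℝ) 1) := by
    apply ContinuousOn.sub
    · exact hρ'c.div (hρc.mul (continuousOn_const.sub hρc)) hρden
    · exact hF'c.div (hFc.mul (continuousOn_const.sub hFc)) hFden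
  have hΓc : ContinuousOn Γ (Icc (-1:ℝ) 1) :=
    fun u hu => (hΓderiv u hu).continuousAt.continuousWithinAt
  -- replace deriv by G in the first integral
  have hcongr : EqOn (fun u => ρ u * (1 - ρ u) * (deriv Γ u)^2)
      (fun u => ρ u * (1 - ρ u) * (G u)^2) (uIcc (-1:ℝ) 1) := by
    intro u hu
    rw [uIcc_of_le h11] at hu
    simp only [(hΓderiv u hu).deriv]
  rw [intervalIntegral.integral_congr hcongr]
  -- integrability
  have hIcc : uIcc (-1:ℝ) 1 = Icc (-1:ℝ) 1 := uIcc_of_le h11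
  have hint1 : IntervalIntegrable (fun u => ρ u * (1 - ρ u) * (G u)^2) volume (-1) 1 := by
    apply ContinuousOn.intervalIntegrable
    rw [hIcc]
    exact ((hρc.mul (continuousOn_const.sub hρc)).mul (hGc.pow 2))
  have hint2 : IntervalIntegrable (fun u => ρ'' u * Γ u) volume (-1) 1 := by
    apply ContinuousOn.intervalIntegrable
    rw [hIcc]
    exact hρ''cont.mul hΓc
  rw [← intervalIntegral.integral_add hint1 hint2]
  -- the antiderivative
  set g : ℝ → ℝ := fun u => F' u / (F u * (1 - F u)) with hgdef
  set H : ℝ → ℝ := fun u => ρ' u * Γ u - (ρ u - F u) * g u with hHdef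
  have hHc : ContinuousOn H (Icc (-1:ℝ) 1) := by
    apply ContinuousOn.sub (hρ'c.mul hΓc)
    exact (hρc.sub hFc).mul (hF'c.div (hFc.mul (continuousOn_const.sub hFc)) hFden)
  have key : ∀ u ∈ Ioo (-1:ℝ) 1,
      HasDerivAt H (ρ u * (1 - ρ u) * (G u)^2 + ρ'' u * Γ u) u := by
    intro u hu
    have hu' : u ∈ Icc (-1:ℝ) 1 := Ioo_subset_Icc_self hu
    obtain ⟨a1, a2, a3, a4⟩ := hmem u hu'
    have hρne : ρ u ≠ 0 := ne_of_gt a1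
    have h1ρne : (1:ℝ) - ρ u ≠ 0 := by linarith
    have hFne : F u ≠ 0 := ne_of_gt a3
    have h1Fne : (1:ℝ) - F u ≠ 0 := by linarith
    have hdenne : F u * (1 - F u) ≠ 0 := mul_ne_zero hFne h1Fne
    have hgd : HasDerivAt g
        ((F'' u * (F u * (1 - F u)) - F' u * (F' u * (1 - F u) + F u * (0 - F' u)))
          / (F u * (1 - F u))^2) u :=
      (hF' u hu').div ((hF u hu').mul ((hasDerivAt_const u (1:ℝ)).sub (hF u hu'))) hdenne
    have hd1 : HasDerivAt (fun v => ρ' v * Γ v) (ρ'' u * Γ u + ρ' u * G u) u :=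
      (hρ' u hu').mul (hΓderiv u hu')
    have hd2 : HasDerivAt (fun v => (ρ v - F v) * g v)
        ((ρ' u - F' u) * g u + (ρ u - F u) *
          ((F'' u * (F u * (1 - F u)) - F' u * (F' u * (1 - F u) + F u * (0 - F' u)))
            / (F u * (1 - F u))^2)) u :=
      ((hρ u hu').sub (hF u hu')).mul hgd
    have h := hd1.sub hd2
    convert h using 1
    · rfl
    · rfl
    · rfl
    rw [hODE u hu, hGdef, hgdef]
    field_simp
    ring
  have hintI : IntervalIntegrable
      (fun u => ρ u * (1 - ρ u) * (G u)^2 + ρ'' u * Γ u) volume (-1) 1 :=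
    hint1.add hint2
  rw [intervalIntegral.integral_eq_sub_of_hasDerivAt_of_le h11 hHc key hintI]
  have hΓ1 : Γ 1 = 0 := by rw [hΓdef]; simp [hρbp, hFbp]
  have hΓm : Γ (-1) = 0 := by rw [hΓdef]; simp [hρbm, hFbm]
  rw [hHdef]
  simp only [hΓ1, hΓm, hρbp, hρbm, hFbp, hFbm]
  ring
end

section
/- Spectral estimate for the interpolating path: let λ_k = k²π²/8 and e_k an orthonormal Dirichlet eigenbasis of -(1/2)Δ on [-1,1], let c_k ∈ ℝ with Σ c_k² < ∞, and define h(t) := -Σ_k λ_k ((2e^{λ_k t} - 1)/(e^{λ_k} - 1)) c_k e_k for t ∈ [0,1]. Then ∫_0^1 ‖h(t)‖²_{H₋₁} dt ≤ 4 Σ_k c_k², where ‖h‖²_{H₋₁} := Σ_k (1/(2λ_k)) ⟨h, e_k⟩². -/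
open Real MeasureTheory intervalIntegral

private lemma stmt15_exp_int (L : ℝ) (hL : 0 < L) :
    ∫ t in (0:ℝ)..1, Real.exp (2*L*(t-1)) = (1 - Real.exp (-(2*L))) / (2*L) := by
  have hderiv : ∀ t ∈ Set.uIcc (0:ℝ) 1,
      HasDerivAt (fun t => Real.exp (2*L*(t-1)) / (2*L)) (Real.exp (2*L*(t-1))) t := by
    intro t _
    have h1 : HasDerivAt (fun t : ℝ => 2*L*(t-1)) (2*L) t := by
      simpa using ((hasDerivAt_id t).sub_const 1).const_mul (2*L)
    have h2 := (h1.exp).div_const (2*L)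
    exact h2.congr_deriv (by field_simp)
  have hcont : IntervalIntegrable (fun t => Real.exp (2*L*(t-1))) volume 0 1 :=
    (Real.continuous_exp.comp (by continuity)).intervalIntegrable _ _
  rw [integral_eq_sub_of_hasDerivAt hderiv hcont]
  have : 2*L*((1:ℝ)-1) = 0 := by ring
  rw [this]
  have : 2*L*((0:ℝ)-1) = -(2*L) := by ring
  rw [this, Real.exp_zero]
  ring

private lemma stmt15_aux (L c : ℝ) (hL : 1 ≤ L) :
    ∫ t in (0:ℝ)..1,
      (1 / (2*L)) * (L * ((2 * Real.exp (L*t) - 1) / (Real.exp L - 1)) * c)^2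
      ≤ 4 * c^2 := by
  have hLpos : (0:ℝ) < L := lt_of_lt_of_le one_pos hL
  have h2 : (2:ℝ) ≤ Real.exp L := by
    have := Real.add_one_le_exp L
    linarith
  have hden : (0:ℝ) < Real.exp L - 1 := by linarith
  have hFcont : Continuous (fun t : ℝ =>
      (1 / (2*L)) * (L * ((2 * Real.exp (L*t) - 1) / (Real.exp L - 1)) * c)^2) := by
    have : Continuous fun t : ℝ => Real.exp (L*t) := Real.continuous_exp.comp (by continuity)
    continuity
  have hGcont : Continuous (fun t : ℝ => (8*L*c^2) * Real.exp (2*L*(t-1))) := by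
    have : Continuous fun t : ℝ => Real.exp (2*L*(t-1)) :=
      Real.continuous_exp.comp (by continuity)
    continuity
  have hmono : ∀ t ∈ Set.Icc (0:ℝ) 1,
      (1 / (2*L)) * (L * ((2 * Real.exp (L*t) - 1) / (Real.exp L - 1)) * c)^2
        ≤ (8*L*c^2) * Real.exp (2*L*(t-1)) := by
    intro t ht
    set r : ℝ := (2 * Real.exp (L*t) - 1) / (Real.exp L - 1) with hr_def
    have hLt : 0 ≤ L * t := mul_nonneg hLpos.le ht.1
    have hexp1 : 1 ≤ Real.exp (L*t) := Real.one_le_exp hLt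
    have hr0 : 0 ≤ r := div_nonneg (by linarith) hden.le
    have e1 : Real.exp (L*(t-1)) * Real.exp L = Real.exp (L*t) := by
      rw [← Real.exp_add]; ring_nf
    have hr_le : r ≤ 4 * Real.exp (L*(t-1)) := by
      rw [hr_def, div_le_iff₀ hden]
      nlinarith [Real.exp_pos (L*(t-1)), Real.exp_pos (L*t)]
    have e2 : Real.exp (L*(t-1)) * Real.exp (L*(t-1)) = Real.exp (2*L*(t-1)) := by
      rw [← Real.exp_add]; ring_nf
    have hr2 : r^2 ≤ 16 * Real.exp (2*L*(t-1)) := by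
      nlinarith [Real.exp_pos (L*(t-1))]
    have heq : (1 / (2*L)) * (L * r * c)^2 = (L/2) * r^2 * c^2 := by
      field_simp
    rw [heq]
    have : (L/2) * r^2 * c^2 ≤ (L/2) * (16 * Real.exp (2*L*(t-1))) * c^2 := by
      have h0 : (0:ℝ) ≤ L/2 := by positivity
      gcongr
    calc (L/2) * r^2 * c^2 ≤ (L/2) * (16 * Real.exp (2*L*(t-1))) * c^2 := this
      _ = (8*L*c^2) * Real.exp (2*L*(t-1)) := by ring
  have hle : (∫ t in (0:ℝ)..1,
      (1 / (2*L)) * (L * ((2 * Real.exp (L*t) - 1) / (Real.exp L - 1)) * c)^2)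
      ≤ ∫ t in (0:ℝ)..1, (8*L*c^2) * Real.exp (2*L*(t-1)) :=
    intervalIntegral.integral_mono_on zero_le_one (hFcont.intervalIntegrable _ _)
      (hGcont.intervalIntegrable _ _) hmono
  have hcalc : (∫ t in (0:ℝ)..1, (8*L*c^2) * Real.exp (2*L*(t-1)))
      = (8*L*c^2) * ((1 - Real.exp (-(2*L))) / (2*L)) := by
    rw [intervalIntegral.integral_const_mul, stmt15_exp_int L hLpos]
  have hfin : (8*L*c^2) * ((1 - Real.exp (-(2*L))) / (2*L)) ≤ 4 * c^2 := by
    have hexp : 0 < Real.exp (-(2*L)) := Real.exp_pos _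
    have hexp2 : Real.exp (-(2*L)) ≤ 1 := Real.exp_le_one_iff.2 (by linarith)
    have : (8*L*c^2) * ((1 - Real.exp (-(2*L))) / (2*L)) = 4 * c^2 * (1 - Real.exp (-(2*L))) := by
      field_simp
      ring
    rw [this]
    nlinarith [sq_nonneg c]
  linarith

/-- Spectral estimate for the interpolating path. With `λ_k = k²π²/8`
(`k ≥ 1`) and square-summable coefficients `c_k`, the path
`h(t) = -Σ_k λ_k ((2e^{λ_k t}-1)/(e^{λ_k}-1)) c_k e_k` satisfies
`∫_0^1 ‖h(t)‖²_{H₋₁} dt ≤ 4 Σ_k c_k²`, where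
`‖h‖²_{H₋₁} = Σ_k (1/(2λ_k)) ⟨h,e_k⟩²`. -/
theorem stmt15
    (c : ℕ → ℝ) (hc : Summable (fun k => (c k)^2)) :
    (∫ t in (0:ℝ)..1, ∑' k : ℕ,
        (1 / (2 * (((k:ℝ)+1)^2 * π^2 / 8))) *
          ((((k:ℝ)+1)^2 * π^2 / 8) *
            ((2 * Real.exp ((((k:ℝ)+1)^2 * π^2 / 8) * t) - 1)
              / (Real.exp (((k:ℝ)+1)^2 * π^2 / 8) - 1)) * c k)^2)
      ≤ 4 * ∑' k : ℕ, (c k)^2 := by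
  set lam : ℕ → ℝ := fun k => ((k:ℝ)+1)^2 * π^2 / 8 with hlam_def
  set F : ℕ → ℝ → ℝ := fun k t =>
    (1 / (2 * lam k)) *
      (lam k * ((2 * Real.exp (lam k * t) - 1) / (Real.exp (lam k) - 1)) * c k)^2
    with hF_def
  have hlam : ∀ k, 1 ≤ lam k := by
    intro k
    have hk : (1:ℝ) ≤ ((k:ℝ)+1)^2 := by
      have hk0 : (0:ℝ) ≤ (k:ℝ) := Nat.cast_nonneg k
      have : (1:ℝ) ≤ (k:ℝ)+1 := by linarith
      nlinarith
    have hpi : (3:ℝ) < π := Real.pi_gt_three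
    simp only [hlam_def]
    nlinarith
  have hF_nonneg : ∀ k t, 0 ≤ F k t := by
    intro k t
    have := hlam k
    apply mul_nonneg
    · positivity
    · exact sq_nonneg _
  have hF_cont : ∀ k, Continuous (F k) := by
    intro k
    have h0 : Continuous fun t : ℝ => Real.exp (lam k * t) :=
      Real.continuous_exp.comp (continuous_const.mul continuous_id)
    have h1 : Continuous fun t : ℝ => 2 * Real.exp (lam k * t) - 1 :=
      (continuous_const.mul h0).sub continuous_const
    have h2 : Continuous fun t : ℝ =>
        (2 * Real.exp (lam k * t) - 1) / (Real.exp (lam k) - 1) :=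
      h1.div_const _
    exact continuous_const.mul (((continuous_const.mul h2).mul continuous_const).pow 2)
  have haux : ∀ k, (∫ t in (0:ℝ)..1, F k t) ≤ 4 * (c k)^2 := fun k =>
    stmt15_aux (lam k) (c k) (hlam k)
  have hint : ∀ k, Integrable (F k) (volume.restrict (Set.Ioc (0:ℝ) 1)) := fun k =>
    (hF_cont k).integrableOn_Ioc
  have hnorm : ∀ k, (∫ a in Set.Ioc (0:ℝ) 1, ‖F k a‖) = ∫ t in (0:ℝ)..1, F k t := by
    intro k
    rw [intervalIntegral.integral_of_le zero_le_one]
    congr 1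
    funext a
    exact Real.norm_of_nonneg (hF_nonneg k a)
  have hsum : Summable fun k => ∫ a in Set.Ioc (0:ℝ) 1, ‖F k a‖ := by
    apply Summable.of_nonneg_of_le
      (fun k => integral_nonneg fun a => norm_nonneg _)
      (fun k => by rw [hnorm k]; exact haux k)
      (hc.mul_left 4)
  have hswap := MeasureTheory.integral_tsum_of_summable_integral_norm hint hsum
  rw [intervalIntegral.integral_of_le zero_le_one, ← hswap]
  have hsum2 : Summable fun k => ∫ a in Set.Ioc (0:ℝ) 1, F k a := by
    apply Summable.of_nonneg_of_le
      (fun k => setIntegral_nonneg measurableSet_Ioc fun a _ => hF_nonneg k a)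
      (fun k => ?_) (hc.mul_left 4)
    rw [← intervalIntegral.integral_of_le zero_le_one]
    exact haux k
  calc (∑' k, ∫ a in Set.Ioc (0:ℝ) 1, F k a) ≤ ∑' k, 4 * (c k)^2 := by
        apply Summable.tsum_le_tsum _ hsum2 (hc.mul_left 4)
        intro k
        rw [← intervalIntegral.integral_of_le zero_le_one]
        exact haux k
    _ = 4 * ∑' k, (c k)^2 := tsum_mul_left
end
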